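/- arXiv:1702.04313 — 7 statements merged into one kernel-verified Lean document; each statement's English description precedes it below -/
import Mathlib

section
/- For every ε with 0 < ε < 1 there exists a natural number N such that the following holds. Let A and B be disjoint finite sets with |A| = a ≥ N and |B| = b ≥ N, and let D be a demand graph on (A, B). If every vertex x ∈ A has degree at most (1 − ε)·b/4 in D and every vertex y ∈ B has degree at most (1 − ε)·a/4 in D, then D is resolvable in the complete bipartite graph K_{A,B}. -/
variable {V : Type*}

/-- A demand graph `D` (a finite multiset of demand edges) is resolvable in the
simple graph `G` if to each demand edge one can assign a path of `G` joining its
two endpoints so that the assigned paths are pairwise edge-disjoint. -/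
def IsResolvable (G : SimpleGraph V) (D : Multiset (Sym2 V)) : Prop :=
  ∃ l : List ((u : V) × (v : V) × G.Walk u v),
    (↑(l.map fun p => s(p.1, p.2.1)) : Multiset (Sym2 V)) = D ∧
    (∀ p ∈ l, p.2.2.IsPath) ∧
    l.Pairwise fun p q => ∀ e ∈ p.2.2.edges, e ∉ q.2.2.edges

/-- The complete bipartite graph with color classes `A` and `B`. -/
def completeBipartite (A B : Finset V) : SimpleGraph V where
  Adj u v := u ≠ v ∧ ((u ∈ A ∧ v ∈ B) ∨ (u ∈ B ∧ v ∈ A))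
  symm := ⟨fun _ _ h => ⟨h.1.symm, h.2.symm.imp And.symm And.symm⟩⟩
  loopless := ⟨fun _ h => h.1 rfl⟩

/-- The degree of a vertex in a demand graph: the number of demand edges
(counted with multiplicity) incident to it. -/
def demandDegree [DecidableEq V] (D : Multiset (Sym2 V)) (v : V) : ℕ :=
  (D.filter fun e => v ∈ e).card

/-- `D` is a demand graph on the pair of (disjoint) classes `(A, B)`:
every demand edge joins a vertex of `A` to a vertex of `B`. -/
def IsBipartiteDemand (A B : Finset V) (D : Multiset (Sym2 V)) : Prop :=
  ∀ e ∈ D, ∃ a ∈ A, ∃ b ∈ B, e = s(a, b)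

/-!
Route the demand `s t` (`s ∈ A`, `t ∈ B`) along a path `s, y, x, t` with `y ∈ B`, `x ∈ A`.
Split `B` into halves `B₁`, `B₂` and take `y` in the half not containing `t`, dealing the
demands round robin so that demands with a common end `s` get distinct `y` and every vertex is
the middle vertex `y` of at most `M ≈ Δ_B` demands. The pairs `{y, t}` are then the edges of a
bipartite multigraph between `B₁` and `B₂` of maximum degree `M + Δ_B`, and `x` must colour
these edges properly while avoiding, on the edge `{y, t}`, the at most `2M` first vertices of
the demands whose middle vertex is `y` or `t`. By König's and Galvin's theorems lists of size
`|A| - 2M ≥ M + Δ_B` suffice, and `3M + Δ_B ≈ 4Δ_B ≤ (1 - ε)|A|`.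
-/

open Finset

section EdgeColoring

variable {ι α β γ C : Type*} (row : ι → α) (col : ι → β)

/-- Edge `i` of a bipartite multigraph joins `row i` to `col i`. -/
def IsProperEdgeColoringOn (s : Set ι) (φ : ι → C) : Prop :=
  s.Pairwise fun i j => row i = row j ∨ col i = col j → φ i ≠ φ j

/-- Galvin's orientation of the line graph. -/
def GalvinArc [LT γ] (φ : ι → γ) (i j : ι) : Prop :=
  (row j = row i ∧ φ i < φ j) ∨ (col j = col i ∧ φ j < φ i)

def KempeChain (φ : ι → C) (a b : C) : ι → ι → Prop :=
  Relation.ReflTransGen fun i j =>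
    (φ i = a ∧ φ j = b ∧ row j = row i) ∨ (φ i = b ∧ φ j = a ∧ col j = col i)

variable {row col}

/-- Remove an edge `f` which is maximal in its row and beaten in its column by an edge maximal in
its row; if there is none, the row-maximal edges form the kernel. -/
theorem exists_kernel_galvinArc [LinearOrder γ] {φ : ι → γ}
    (hφ : IsProperEdgeColoringOn row col Set.univ φ) (S : Finset ι) :
    ∃ M ⊆ S, (M : Set ι).Pairwise (fun i j => row i ≠ row j ∧ col i ≠ col j) ∧
      ∀ g ∈ S, g ∉ M → ∃ m ∈ M, GalvinArc row col φ g m := by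
  classical
  induction S using Finset.strongInduction with
  | H S ih =>
  set IsTop : ι → Prop := fun e => ∀ h ∈ S, row h = row e → φ h ≤ φ e
  by_cases hbad : ∃ e ∈ S, ∃ f ∈ S, col e = col f ∧ φ e < φ f ∧ IsTop e ∧ IsTop f
  · obtain ⟨e, he, f, hf, hcol, hlt, hetop, -⟩ := hbad
    obtain ⟨M, hMS, hM, habs⟩ := ih _ (erase_ssubset hf)
    refine ⟨M, hMS.trans (erase_subset _ _), hM, fun g hg hgM => ?_⟩
    obtain rfl | hgf := eq_or_ne g f
    · have hef : e ≠ g := hlt.ne ∘ congrArg φ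
      by_cases heM : e ∈ M
      · exact ⟨e, heM, Or.inr ⟨hcol, hlt⟩⟩
      obtain ⟨m, hm, hrow | hcol'⟩ := habs e (mem_erase.2 ⟨hef, he⟩) heM
      · exact absurd (hetop m (mem_of_mem_erase (hMS hm)) hrow.1) (not_le.2 hrow.2)
      · exact ⟨m, hm, Or.inr ⟨hcol'.1.trans hcol, hcol'.2.trans hlt⟩⟩
    · exact habs g (mem_erase.2 ⟨hgf, hg⟩) hgM
  push Not at hbad
  refine ⟨S.filter IsTop, filter_subset _ _, ?_, ?_⟩
  · intro i hi j hj hij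
    simp only [mem_coe, mem_filter] at hi hj
    refine ⟨fun hrow => ?_, fun hcol => ?_⟩
    · exact hφ trivial trivial hij (Or.inl hrow)
        (le_antisymm (hj.2 i hi.1 hrow) (hi.2 j hj.1 hrow.symm))
    · rcases lt_or_gt_of_ne (hφ trivial trivial hij (Or.inr hcol)) with hlt | hlt
      · exact hbad i hi.1 j hj.1 hcol hlt hi.2 hj.2
      · exact hbad j hj.1 i hi.1 hcol.symm hlt hj.2 hi.2
  · intro g hg hgM
    obtain ⟨m, hm, hmax⟩ := (S.filter (row · = row g)).exists_max_image φ ⟨g, by simp [hg]⟩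
    rw [mem_filter] at hm
    have hmtop : IsTop m := fun h hh hrow => hmax h (mem_filter.2 ⟨hh, hrow.trans hm.2⟩)
    refine ⟨m, mem_filter.2 ⟨hm.1, hmtop⟩, Or.inl ⟨hm.2, ?_⟩⟩
    have hgtop : ¬ IsTop g := fun h => hgM (mem_filter.2 ⟨hg, h⟩)
    simp only [IsTop, not_forall, not_le] at hgtop
    obtain ⟨h, hh, hrow, hlt⟩ := hgtop
    exact hlt.trans_le (hmax h (mem_filter.2 ⟨hh, hrow⟩))

open Classical in
/-- Colour a kernel of the edges whose list contains `c` with `c`, and recurse on the other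
edges with `c` removed from every list. -/
theorem exists_listColoring_of_card_galvinArc_lt [LinearOrder γ] [DecidableEq C] [Nonempty C]
    {φ : ι → γ} (hφ : IsProperEdgeColoringOn row col Set.univ φ) (R : Finset ι) (L : ι → Finset C)
    (hL : ∀ i ∈ R, #(R.filter (GalvinArc row col φ i)) < #(L i)) :
    ∃ x : ι → C, (∀ i ∈ R, x i ∈ L i) ∧ IsProperEdgeColoringOn row col R x := by
  classical
  induction R using Finset.strongInduction generalizing L with
  | H R ih =>
  obtain rfl | ⟨i₀, hi₀⟩ := R.eq_empty_or_nonempty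
  · exact ⟨fun _ => Classical.arbitrary C, by simp, by simp [IsProperEdgeColoringOn]⟩
  obtain ⟨c, hc⟩ : (L i₀).Nonempty := card_pos.1 ((Nat.zero_le _).trans_lt (hL i₀ hi₀))
  obtain ⟨M, hMS, hM, habs⟩ := exists_kernel_galvinArc hφ (R.filter (c ∈ L ·))
  have hMR : M ⊆ R := hMS.trans (filter_subset _ _)
  have hMne : M.Nonempty := by
    by_cases hi₀M : i₀ ∈ M
    · exact ⟨i₀, hi₀M⟩
    · obtain ⟨m, hm, -⟩ := habs i₀ (mem_filter.2 ⟨hi₀, hc⟩) hi₀M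
      exact ⟨m, hm⟩
  have hL' : ∀ i ∈ R \ M, #((R \ M).filter (GalvinArc row col φ i)) < #((L i).erase c) := by
    intro i hi
    rw [mem_sdiff] at hi
    have hsub : (R \ M).filter (GalvinArc row col φ i) ⊆ R.filter (GalvinArc row col φ i) :=
      filter_subset_filter _ sdiff_subset
    by_cases hci : c ∈ L i
    · obtain ⟨m, hm, harc⟩ := habs i (mem_filter.2 ⟨hi.1, hci⟩) hi.2
      have hlt : #((R \ M).filter (GalvinArc row col φ i)) < #(R.filter (GalvinArc row col φ i)) :=
        card_lt_card <| (ssubset_iff_of_subset hsub).2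
          ⟨m, mem_filter.2 ⟨hMR hm, harc⟩, fun h => (mem_sdiff.1 (mem_of_mem_filter _ h)).2 hm⟩
      have := hL i hi.1
      rw [card_erase_of_mem hci]
      omega
    · rw [erase_eq_of_notMem hci]
      exact (card_le_card hsub).trans_lt (hL i hi.1)
  obtain ⟨x, hxL, hx⟩ := ih (R \ M) (sdiff_ssubset hMR hMne) _ hL'
  have hxc : ∀ i ∈ R, i ∉ M → x i ≠ c := fun i hi hiM =>
    ne_of_mem_erase (hxL i (mem_sdiff.2 ⟨hi, hiM⟩))
  refine ⟨fun i => if i ∈ M then c else x i, fun i hi => ?_, fun i hi j hj hij hshare => ?_⟩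
  · dsimp only
    split_ifs with hiM
    · exact (mem_filter.1 (hMS hiM)).2
    · exact mem_of_mem_erase (hxL i (mem_sdiff.2 ⟨hi, hiM⟩))
  · dsimp only
    split_ifs with hiM hjM hjM
    · exact absurd hshare (by have := hM hiM hjM hij; tauto)
    · exact (hxc j hj hjM).symm
    · exact hxc i hi hiM
    · exact hx (mem_sdiff.2 ⟨hi, hiM⟩) (mem_sdiff.2 ⟨hj, hjM⟩) hij hshare

theorem card_filter_galvinArc_lt {K : ℕ} {φ : ι → Fin K}
    (hφ : IsProperEdgeColoringOn row col Set.univ φ) (s : Finset ι) (i : ι)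
    [DecidablePred (GalvinArc row col φ i)] :
    #(s.filter (GalvinArc row col φ i)) < K := by
  have hmaps : Set.MapsTo φ (s.filter (GalvinArc row col φ i)) (univ.erase (φ i) : Finset _) := by
    rintro j hj
    simp only [mem_coe, mem_filter, GalvinArc] at hj
    simp only [mem_coe, mem_erase, mem_univ, and_true]
    rcases hj.2 with h | h
    · exact h.2.ne'
    · exact h.2.ne
  have hinj : Set.InjOn φ (s.filter (GalvinArc row col φ i)) := by
    intro j hj j' hj' heq
    simp only [mem_coe, mem_filter, GalvinArc] at hj hj'
    by_contra hne
    rcases hj.2 with h | h <;> rcases hj'.2 with h' | h'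
    · exact hφ trivial trivial hne (Or.inl (h.1.trans h'.1.symm)) heq
    · exact absurd (h'.2.trans (heq ▸ h.2)) (lt_irrefl _)
    · exact absurd (h.2.trans (heq ▸ h'.2)) (lt_irrefl _)
    · exact hφ trivial trivial hne (Or.inr (h.1.trans h'.1.symm)) heq
  calc #(s.filter (GalvinArc row col φ i)) ≤ #(univ.erase (φ i)) :=
        card_le_card_of_injOn φ hmaps hinj
    _ < K := by
        rw [card_erase_of_mem (mem_univ _), card_univ, Fintype.card_fin]
        exact Nat.sub_lt (φ i).pos one_pos

/-- Galvin's theorem: the list chromatic index of a bipartite multigraph equals its chromatic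
index. -/
theorem exists_listColoring [Fintype ι] [DecidableEq C] {K : ℕ} {φ : ι → Fin K}
    (hφ : IsProperEdgeColoringOn row col Set.univ φ) (L : ι → Finset C) (hL : ∀ i, K ≤ #(L i)) :
    ∃ x : ι → C, (∀ i, x i ∈ L i) ∧ IsProperEdgeColoringOn row col Set.univ x := by
  classical
  obtain hι | ⟨⟨i⟩⟩ := isEmpty_or_nonempty ι
  · exact ⟨isEmptyElim, isEmptyElim, fun i => isEmptyElim i⟩
  have : Nonempty C := (card_pos.1 ((φ i).pos.trans_le (hL i))).to_subtype.map Subtype.val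
  obtain ⟨x, hxL, hx⟩ := exists_listColoring_of_card_galvinArc_lt hφ univ L
    fun i _ => (card_filter_galvinArc_lt hφ univ i).trans_le (hL i)
  exact ⟨x, fun i => hxL i (mem_univ i), by simpa using hx⟩

section Kempe

variable {φ : ι → C} {a b : C} {j₀ j : ι}

theorem KempeChain.eq_or_eq (h : KempeChain row col φ a b j₀ j) (hj₀ : φ j₀ = a) :
    φ j = a ∨ φ j = b := by
  induction h with
  | refl => exact Or.inl hj₀
  | tail _ hstep _ => rcases hstep with ⟨-, h, -⟩ | ⟨-, h, -⟩ <;> simp [h]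

theorem KempeChain.exists_row_pred (h : KempeChain row col φ a b j₀ j) (hj₀ : φ j₀ = a)
    (hab : a ≠ b) (hj : φ j = b) : ∃ w, KempeChain row col φ a b j₀ w ∧ φ w = a ∧ row w = row j := by
  rcases h.cases_tail with rfl | ⟨w, hw, ⟨hwa, -, hrow⟩ | ⟨-, hja, -⟩⟩
  · exact absurd (hj₀.symm.trans hj) hab
  · exact ⟨w, hw, hwa, hrow.symm⟩
  · exact absurd (hja.symm.trans hj) hab

theorem KempeChain.exists_col_pred (h : KempeChain row col φ a b j₀ j) (hj₀ : j ≠ j₀)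
    (hab : a ≠ b) (hj : φ j = a) : ∃ w, KempeChain row col φ a b j₀ w ∧ φ w = b ∧ col w = col j := by
  rcases h.cases_tail with rfl | ⟨w, hw, ⟨-, hjb, -⟩ | ⟨hwb, -, hcol⟩⟩
  · exact absurd rfl hj₀
  · exact absurd (hj.symm.trans hjb) hab
  · exact ⟨w, hw, hwb, hcol.symm⟩

open Classical in
/-- An edge of the chain and an edge outside it never clash after the swap: the chain would
have continued to the outside edge, or the edge through which the chain entered clashes with it
already. -/
theorem isProperEdgeColoringOn_swap_kempeChain [DecidableEq C]
    (hφ : IsProperEdgeColoringOn row col Set.univ φ) (hj₀ : φ j₀ = a)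
    (hb : ∀ i, col i = col j₀ → φ i ≠ b) :
    IsProperEdgeColoringOn row col Set.univ
      fun i => if KempeChain row col φ a b j₀ i then Equiv.swap a b (φ i) else φ i := by
  have hab : a ≠ b := hj₀ ▸ hb j₀ rfl
  have hmixed : ∀ i j, KempeChain row col φ a b j₀ i → ¬ KempeChain row col φ a b j₀ j →
      (row i = row j ∨ col i = col j) → Equiv.swap a b (φ i) ≠ φ j := by
    intro i j hi hj hshare heq
    have hne : ∀ w, KempeChain row col φ a b j₀ w → w ≠ j := fun w hw h => hj (h ▸ hw)
    rcases hi.eq_or_eq hj₀ with hia | hib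
    · rw [hia, Equiv.swap_apply_left] at heq
      rcases hshare with hrow | hcol
      · exact hj (hi.tail (Or.inl ⟨hia, heq.symm, hrow.symm⟩))
      · by_cases hi₀ : i = j₀
        · exact hb j (hcol.symm.trans (congrArg col hi₀)) heq.symm
        · obtain ⟨w, hw, hwb, hwcol⟩ := hi.exists_col_pred hi₀ hab hia
          exact hφ trivial trivial (hne w hw) (Or.inr (hwcol.trans hcol)) (hwb.trans heq)
    · rw [hib, Equiv.swap_apply_right] at heq
      rcases hshare with hrow | hcol
      · obtain ⟨w, hw, hwa, hwrow⟩ := hi.exists_row_pred hj₀ hab hib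
        exact hφ trivial trivial (hne w hw) (Or.inl (hwrow.trans hrow)) (hwa.trans heq)
      · exact hj (hi.tail (Or.inr ⟨hib, heq.symm, hcol.symm⟩))
  intro i _ j _ hij hshare
  dsimp only
  split_ifs with hi hj hj
  · exact (Equiv.swap a b).injective.ne (hφ trivial trivial hij hshare)
  · exact hmixed i j hi hj hshare
  · exact (hmixed j i hj hi (hshare.imp Eq.symm Eq.symm)).symm
  · exact hφ trivial trivial hij hshare

/-- If `a` is missing at the row vertex `r` and `b` at the column vertex `c`, swapping `a` and
`b` along the Kempe chain leaving `c` by its `a`-edge makes `a` missing at both. The chain never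
reaches `r`, as each of its `b`-edges is entered from an `a`-edge in the same row. -/
theorem exists_recoloring_missing_at [DecidableEq C]
    (hφ : IsProperEdgeColoringOn row col Set.univ φ) {r : α} {c : β}
    (ha : ∀ i, row i = r → φ i ≠ a) (hb : ∀ i, col i = c → φ i ≠ b) :
    ∃ φ' : ι → C, IsProperEdgeColoringOn row col Set.univ φ' ∧
      (∀ i, row i = r → φ' i ≠ a) ∧ (∀ i, col i = c → φ' i ≠ a) := by
  classical
  by_cases hfree : ∀ i, col i = c → φ i ≠ a
  · exact ⟨φ, hφ, ha, hfree⟩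
  push Not at hfree
  obtain ⟨j₀, rfl, hj₀⟩ := hfree
  have hab : a ≠ b := hj₀ ▸ hb j₀ rfl
  refine ⟨_, isProperEdgeColoringOn_swap_kempeChain hφ hj₀ hb, fun i hir => ?_, fun i hic => ?_⟩
  · split_ifs with hi
    · rcases hi.eq_or_eq hj₀ with h | h
      · rw [h, Equiv.swap_apply_left]; exact hab.symm
      · obtain ⟨w, -, hwa, hwrow⟩ := hi.exists_row_pred hj₀ hab h
        exact absurd hwa (ha w (hwrow.trans hir))
    · exact ha i hir
  · split_ifs with hi
    · rcases hi.eq_or_eq hj₀ with h | h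
      · rw [h, Equiv.swap_apply_left]; exact hab.symm
      · exact absurd h (hb i hic)
    · intro hia
      have hi₀ : i ≠ j₀ := fun h => hi (h ▸ Relation.ReflTransGen.refl)
      exact hφ trivial trivial hi₀ (Or.inr hic) (hia.trans hj₀.symm)

end Kempe

theorem exists_forall_ne_of_card_filter_lt [Fintype ι] {K : ℕ} (p : ι → Prop) [DecidablePred p]
    (f : ι → Fin K) (h : #(univ.filter p) < K) : ∃ a, ∀ i, p i → f i ≠ a := by
  classical
  obtain ⟨a, -, ha⟩ := exists_mem_notMem_of_card_lt_card (s := (univ.filter p).image f)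
    (t := univ) (by simpa using card_image_le.trans_lt h)
  exact ⟨a, fun i hi hfa => ha (mem_image.2 ⟨i, mem_filter.2 ⟨mem_univ i, hi⟩, hfa⟩)⟩

theorem card_filter_succ_le {m : ℕ} (p : Fin (m + 1) → Prop) [DecidablePred p] :
    #(univ.filter fun i : Fin m => p i.succ) ≤ #(univ.filter p) := by
  rw [Fin.card_filter_univ_succ]
  split_ifs <;> omega

theorem card_filter_succ_lt {m : ℕ} {p : Fin (m + 1) → Prop} [DecidablePred p] (h : p 0) :
    #(univ.filter fun i : Fin m => p i.succ) < #(univ.filter p) := by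
  rw [Fin.card_filter_univ_succ, if_pos h]
  omega

/-- König's edge-colouring theorem for bipartite multigraphs of maximum degree `K`, by adding
one edge at a time and making room for it with a Kempe chain. -/
theorem exists_properEdgeColoring [DecidableEq α] [DecidableEq β] {K : ℕ} :
    ∀ {m : ℕ} (row : Fin m → α) (col : Fin m → β), (∀ r, #(univ.filter (row · = r)) ≤ K) →
      (∀ c, #(univ.filter (col · = c)) ≤ K) →
      ∃ φ : Fin m → Fin K, IsProperEdgeColoringOn row col Set.univ φ
  | 0, _, _, _, _ => ⟨Fin.elim0, fun i => i.elim0⟩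
  | m + 1, row, col, hrow, hcol => by
    obtain ⟨φ, hφ⟩ := exists_properEdgeColoring (row ∘ Fin.succ) (col ∘ Fin.succ)
      (fun r => (card_filter_succ_le (row · = r)).trans (hrow r))
      (fun c => (card_filter_succ_le (col · = c)).trans (hcol c))
    obtain ⟨a, ha⟩ := exists_forall_ne_of_card_filter_lt (row ·.succ = row 0) φ
      ((card_filter_succ_lt (p := (row · = row 0)) rfl).trans_le (hrow _))
    obtain ⟨b, hb⟩ := exists_forall_ne_of_card_filter_lt (col ·.succ = col 0) φ
      ((card_filter_succ_lt (p := (col · = col 0)) rfl).trans_le (hcol _))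
    obtain ⟨φ', hφ', ha', hb'⟩ := exists_recoloring_missing_at hφ ha hb
    refine ⟨Fin.cons a φ', fun i _ j _ hij hshare => ?_⟩
    cases i using Fin.cases <;> cases j using Fin.cases
    · exact absurd rfl hij
    · simp only [Fin.cons_zero, Fin.cons_succ]
      rcases hshare with h | h
      · exact (ha' _ h.symm).symm
      · exact (hb' _ h.symm).symm
    · simp only [Fin.cons_zero, Fin.cons_succ]
      rcases hshare with h | h
      · exact ha' _ h
      · exact hb' _ h
    · simp only [Fin.cons_succ]
      exact hφ' trivial trivial (fun h => hij (congrArg Fin.succ h)) hshare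

end EdgeColoring

section RoundRobin

variable {ι κ : Type*} [DecidableEq κ] (key : ι → κ)

/-- A numbering of `I` by `0, …, #I - 1` in which every class of `key` is an interval. -/
theorem exists_rank_grouped (I : Finset ι) :
    ∃ ℓ : ι → ℕ, Set.InjOn ℓ I ∧ (∀ i ∈ I, ℓ i < #I) ∧
      ∀ i ∈ I, ∀ j ∈ I, key i = key j → ℓ i < ℓ j + #(I.filter (key · = key i)) := by
  classical
  induction I using Finset.strongInduction with
  | H I ih =>
  obtain rfl | ⟨i₀, hi₀⟩ := I.eq_empty_or_nonempty
  · exact ⟨fun _ => 0, by simp, by simp, by simp⟩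
  set G := I.filter (key · = key i₀)
  have hGI : G ⊆ I := filter_subset _ _
  obtain ⟨ℓ, hinj, hlt, hgap⟩ := ih (I \ G) (sdiff_ssubset hGI ⟨i₀, mem_filter.2 ⟨hi₀, rfl⟩⟩)
  let e : ι → ℕ := fun i => if h : i ∈ G then G.equivFin ⟨i, h⟩ else 0
  have he : ∀ i ∈ G, e i < #G := fun i hi => by simp [e, hi]
  have he_inj : Set.InjOn e G := fun i hi j hj h => by
    simp only [e, dif_pos (mem_coe.1 hi), dif_pos (mem_coe.1 hj), Fin.val_inj] at h
    simpa using G.equivFin.injective h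
  have hcard := card_sdiff_add_card_eq_card hGI
  refine ⟨fun i => if i ∈ G then #(I \ G) + e i else ℓ i, ?_, ?_, ?_⟩
  · intro i hi j hj h
    have hlt' : ∀ k ∈ I, k ∉ G → ℓ k < #(I \ G) := fun k hk hkG => hlt k (mem_sdiff.2 ⟨hk, hkG⟩)
    dsimp only at h
    split_ifs at h with hiG hjG hjG
    · exact he_inj hiG hjG (by omega)
    · exact absurd (hlt' j hj hjG) (by omega)
    · exact absurd (hlt' i hi hiG) (by omega)
    · exact hinj (mem_sdiff.2 ⟨hi, hiG⟩) (mem_sdiff.2 ⟨hj, hjG⟩) h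
  · intro i hi
    dsimp only
    split_ifs with hiG
    · have := he i hiG; omega
    · have := hlt i (mem_sdiff.2 ⟨hi, hiG⟩); omega
  · intro i hi j hj hkey
    have hGiff : j ∈ G ↔ i ∈ G := by simp [G, hi, hj, hkey]
    dsimp only
    split_ifs with hiG hjG hjG
    · have hG : I.filter (key · = key i) = G := by
        simp only [G, (mem_filter.1 hiG).2]
      rw [hG]
      have := he i hiG
      omega
    · exact absurd (hGiff.2 hiG) hjG
    · exact absurd (hGiff.1 hjG) hiG
    · have hmono : #((I \ G).filter (key · = key i)) ≤ #(I.filter (key · = key i)) :=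
        card_le_card (filter_subset_filter _ sdiff_subset)
      have := hgap i (mem_sdiff.2 ⟨hi, hiG⟩) j (mem_sdiff.2 ⟨hj, hjG⟩) hkey
      omega

/-- Round robin: deal the items of `I`, numbered group by group, cyclically onto `C`. The last
clause says that every element of `C` is hit at most `⌈#I / #C⌉` times. -/
theorem exists_roundRobin [DecidableEq V] (I : Finset ι) (C : Finset V) (hC : C.Nonempty)
    (hkey : ∀ k, #(I.filter (key · = k)) ≤ #C) :
    ∃ y : ι → V, (∀ i, y i ∈ C) ∧ (∀ i ∈ I, ∀ j ∈ I, i ≠ j → key i = key j → y i ≠ y j) ∧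
      ∀ v, #C * #(I.filter (y · = v)) < #I + #C := by
  classical
  obtain ⟨ℓ, hinj, hlt, hgap⟩ := exists_rank_grouped key I
  set q := #C
  have hq : 0 < q := card_pos.2 hC
  let y : ι → V := fun i => C.equivFin.symm ⟨ℓ i % q, Nat.mod_lt _ hq⟩
  have hmod : ∀ i j, y i = y j → ℓ i % q = ℓ j % q := fun i j h => by
    simpa using congrArg Fin.val (C.equivFin.symm.injective (Subtype.ext h))
  refine ⟨y, fun i => (C.equivFin.symm _).2, fun i hi j hj hij hij_key h => ?_, fun v => ?_⟩
  · have hi' := hgap i hi j hj hij_key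
    have hj' := hgap j hj i hi hij_key.symm
    have := hkey (key i)
    rw [← hij_key] at hj'
    refine hij (hinj hi hj (Nat.ModEq.eq_of_abs_lt (hmod i j h) ?_))
    rw [abs_sub_lt_iff]
    omega
  · obtain rfl | hI := I.eq_empty_or_nonempty
    · simpa using hq
    have hload : #(I.filter (y · = v)) ≤ #(range ((#I - 1) / q + 1)) := by
      refine card_le_card_of_injOn (ℓ · / q) (fun i hi => ?_) fun i hi j hj h => ?_
      · simp only [mem_coe, mem_filter, mem_range] at hi ⊢
        exact Nat.lt_succ_of_le (Nat.div_le_div_right (Nat.le_sub_one_of_lt (hlt i hi.1)))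
      · simp only [mem_coe, mem_filter] at hi hj
        refine hinj hi.1 hj.1 ?_
        rw [← Nat.div_add_mod (ℓ i) q, ← Nat.div_add_mod (ℓ j) q, hmod i j (hi.2.trans hj.2.symm)]
        simp only at h
        rw [h]
    rw [card_range] at hload
    have := Nat.mul_div_le (#I - 1) q
    have := card_pos.2 hI
    calc q * #(I.filter (y · = v)) ≤ q * ((#I - 1) / q + 1) := Nat.mul_le_mul_left q hload
      _ = q * ((#I - 1) / q) + q := by ring
      _ < #I + q := by omega

end RoundRobin

section Routing

variable {ι : Type*} {A B : Finset V}

theorem completeBipartite_adj_of_mem (hAB : Disjoint A B) {u v : V} (hu : u ∈ A) (hv : v ∈ B) :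
    (completeBipartite A B).Adj u v :=
  ⟨fun h => disjoint_left.1 hAB hu (h ▸ hv), Or.inl ⟨hu, hv⟩⟩

theorem sym2_eq_iff_of_mem (hAB : Disjoint A B) {u v u' v' : V} (hu : u ∈ A) (hv' : v' ∈ B) :
    s(u, v) = s(u', v') ↔ u = u' ∧ v = v' := by
  refine ⟨fun h => ?_, fun h => h.1 ▸ h.2 ▸ rfl⟩
  rcases Sym2.eq_iff.1 h with h | ⟨rfl, -⟩
  · exact h
  · exact absurd hv' (disjoint_left.1 hAB hu)

/-- Demand `i`, from `s i ∈ A` to `t i ∈ B`, is sent along the path `s i, y i, x i, t i`; the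
last three fields make these paths pairwise edge-disjoint. -/
structure IsRouting (A B : Finset V) (s t y x : ι → V) : Prop where
  s_mem : ∀ i, s i ∈ A
  t_mem : ∀ i, t i ∈ B
  y_mem : ∀ i, y i ∈ B
  x_mem : ∀ i, x i ∈ A
  y_ne_t : ∀ i, y i ≠ t i
  y_ne_y : ∀ i j, i ≠ j → s i = s j → y i ≠ y j
  x_ne_x : ∀ i j, i ≠ j → (y i = y j ∨ y i = t j ∨ t i = y j ∨ t i = t j) → x i ≠ x j
  x_ne_s : ∀ i j, (y j = y i ∨ y j = t i) → x i ≠ s j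

theorem IsRouting.isResolvable [Fintype ι] (hAB : Disjoint A B) {s t y x : ι → V}
    (h : IsRouting A B s t y x) :
    IsResolvable (completeBipartite A B) (univ.val.map fun i => s(s i, t i)) := by
  have adj {u v : V} (hu : u ∈ A) (hv : v ∈ B) := completeBipartite_adj_of_mem hAB hu hv
  let w (i : ι) : (completeBipartite A B).Walk (s i) (t i) :=
    .cons (adj (h.s_mem i) (h.y_mem i)) <| .cons (adj (h.x_mem i) (h.y_mem i)).symm <|
      .cons (adj (h.x_mem i) (h.t_mem i)) .nil
  have hw : ∀ i, (w i).edges = [s(s i, y i), s(x i, y i), s(x i, t i)] := fun i => by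
    simp [w, Sym2.eq_swap]
  refine ⟨univ.toList.map fun i => ⟨s i, t i, w i⟩, ?_, ?_, ?_⟩
  · simp only [← Multiset.map_coe, Multiset.map_map, Finset.coe_toList]
    rfl
  · simp only [List.mem_map, mem_toList, mem_univ, true_and, forall_exists_index]
    rintro _ i rfl
    have hsx : s i ≠ x i := (h.x_ne_s i i (Or.inl rfl)).symm
    have hAB' {u v : V} (hu : u ∈ A) (hv : v ∈ B) : u ≠ v := (adj hu hv).1
    simp [w, SimpleGraph.Walk.isPath_def, hsx, h.y_ne_t i, hAB' (h.s_mem i) (h.y_mem i),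
      hAB' (h.s_mem i) (h.t_mem i), (hAB' (h.x_mem i) (h.y_mem i)).symm,
      hAB' (h.x_mem i) (h.t_mem i)]
  · rw [List.pairwise_map]
    refine (nodup_toList univ).imp fun {i j} hij e hei hej => ?_
    simp only [hw, List.mem_cons, List.not_mem_nil, or_false] at hei hej
    have := h.s_mem i; have := h.s_mem j; have := h.t_mem i; have := h.t_mem j
    have := h.x_mem i; have := h.x_mem j; have := h.y_mem i; have := h.y_mem j
    rcases hei with rfl | rfl | rfl <;> rcases hej with h' | h' | h' <;>
      rw [sym2_eq_iff_of_mem hAB (by assumption) (by assumption)] at h' <;>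
      grind [h.y_ne_y, h.x_ne_x, h.x_ne_s]

end Routing

section Construction

variable [DecidableEq V] {ι : Type*} [Fintype ι]

theorem card_filter_eq_le_add {f g h : ι → V} (hf : ∀ i, f i = g i ∨ f i = h i) (v : V) :
    #(univ.filter (f · = v)) ≤ #(univ.filter (g · = v)) + #(univ.filter (h · = v)) := by
  classical
  refine (card_le_card fun i hi => ?_).trans (card_union_le _ _)
  simp only [mem_filter, mem_univ, true_and, mem_union] at hi ⊢
  rcases hf i with h | h
  · exact Or.inl (h ▸ hi)
  · exact Or.inr (h ▸ hi)

theorem exists_roundRobin_of_mem {DB : ℕ} {S C : Finset V} (hC : C.Nonempty) (s t : ι → V)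
    (hsdeg : ∀ v, #(univ.filter (s · = v)) ≤ #C) (htdeg : ∀ v, #(univ.filter (t · = v)) ≤ DB) :
    ∃ y : ι → V, (∀ i, y i ∈ C) ∧
      (∀ i j, t i ∈ S → t j ∈ S → i ≠ j → s i = s j → y i ≠ y j) ∧
      ∀ v, #C * #(univ.filter fun i => t i ∈ S ∧ y i = v) < #S * DB + #C := by
  set I := univ.filter (t · ∈ S)
  obtain ⟨y, hyC, hyinj, hyload⟩ := exists_roundRobin s I C hC fun v =>
    (card_le_card (filter_subset_filter _ (subset_univ I))).trans (hsdeg v)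
  have hI : #I ≤ #S * DB := by
    rw [mul_comm]
    exact card_le_mul_card_image_of_maps_to (fun i hi => (mem_filter.1 hi).2) DB fun v _ =>
      (card_le_card (filter_subset_filter _ (subset_univ _))).trans (htdeg v)
  refine ⟨y, hyC, fun i j hi hj => hyinj i (by simpa [I] using hi) j (by simpa [I] using hj),
    fun v => ?_⟩
  rw [← filter_filter]
  linarith [hyload v]

theorem exists_middle_vertices {B B₁ : Finset V} (hB₁ : B₁ ⊆ B) (hB₁pos : 0 < #B₁)
    (hB₁le : #B₁ ≤ #(B \ B₁)) {DB : ℕ} (s t : ι → V) (ht : ∀ i, t i ∈ B)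
    (hsdeg : ∀ v, #(univ.filter (s · = v)) ≤ #B₁) (htdeg : ∀ v, #(univ.filter (t · = v)) ≤ DB) :
    ∃ y : ι → V, (∀ i, y i ∈ B) ∧ (∀ i, y i ∈ B₁ ↔ t i ∉ B₁) ∧
      (∀ i j, i ≠ j → s i = s j → y i ≠ y j) ∧
      ∀ v, #B₁ * #(univ.filter (y · = v)) < #(B \ B₁) * DB + #B₁ := by
  obtain ⟨y₁, hy₁B₁, hy₁inj, hy₁load⟩ :=
    exists_roundRobin_of_mem (S := B \ B₁) (card_pos.1 hB₁pos) s t hsdeg htdeg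
  obtain ⟨y₂, hy₂B₂, hy₂inj, hy₂load⟩ := exists_roundRobin_of_mem (S := B₁)
    (card_pos.1 (hB₁pos.trans_le hB₁le)) s t (fun v => (hsdeg v).trans hB₁le) htdeg
  have hmem₂ : ∀ i, t i ∉ B₁ ↔ t i ∈ B \ B₁ := fun i => by simp [ht i]
  let y i := if t i ∈ B₁ then y₂ i else y₁ i
  have hyB₁ : ∀ i, y i ∈ B₁ ↔ t i ∉ B₁ := fun i => by
    by_cases hi : t i ∈ B₁
    · simpa [y, hi] using (mem_sdiff.1 (hy₂B₂ i)).2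
    · simpa [y, hi] using hy₁B₁ i
  refine ⟨y, fun i => ?_, hyB₁, fun i j hij hs => ?_, fun v => ?_⟩
  · by_cases hi : t i ∈ B₁
    · simpa [y, hi] using (mem_sdiff.1 (hy₂B₂ i)).1
    · simpa [y, hi] using hB₁ (hy₁B₁ i)
  · by_cases hi : t i ∈ B₁ <;> by_cases hj : t j ∈ B₁
    · simpa [y, hi, hj] using hy₂inj i j hi hj hij hs
    · exact fun h => (hyB₁ i).1 (h ▸ (hyB₁ j).2 hj) hi
    · exact fun h => (hyB₁ j).1 (h ▸ (hyB₁ i).2 hi) hj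
    · simpa [y, hi, hj] using hy₁inj i j ((hmem₂ i).1 hi) ((hmem₂ j).1 hj) hij hs
  · by_cases hv : v ∈ B₁
    · have hsub : univ.filter (y · = v) ⊆ univ.filter fun i => t i ∈ B \ B₁ ∧ y₁ i = v :=
        fun i hi => by
          have hyi : y i = v := (mem_filter.1 hi).2
          have hti : t i ∉ B₁ := (hyB₁ i).1 (hyi ▸ hv)
          simpa [y, hti, ← hmem₂] using hyi
      exact (Nat.mul_le_mul_left _ (card_le_card hsub)).trans_lt (hy₁load v)
    · have hsub : univ.filter (y · = v) ⊆ univ.filter fun i => t i ∈ B₁ ∧ y₂ i = v :=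
        fun i hi => by
          have hyi : y i = v := (mem_filter.1 hi).2
          have hti : t i ∈ B₁ := by_contra fun hti => hv (hyi ▸ (hyB₁ i).2 hti)
          simpa [y, hti] using hyi
      have hL : #(univ.filter (y · = v)) ≤ DB := by
        refine Nat.le_of_lt_succ (Nat.lt_of_mul_lt_mul_left (a := #(B \ B₁)) ?_)
        have := Nat.mul_le_mul_left #(B \ B₁) (card_le_card hsub)
        have := Nat.mul_le_mul_right DB hB₁le
        have := hy₂load v
        rw [Nat.succ_eq_add_one, mul_add_one]
        omega
      have := Nat.mul_le_mul_left #B₁ hL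
      have := Nat.mul_le_mul_right DB hB₁le
      omega

/-- The pairs `{y i, t i}` are the edges of a bipartite multigraph between `B₁` and `B \ B₁` of
maximum degree `M + DB`; `x` is a proper edge colouring of it from lists of size at least
`#A - 2M`, which Galvin's theorem provides. -/
theorem exists_outer_vertices {n M DB : ℕ} {A B₁ : Finset V} (s t y : Fin n → V)
    (hy : ∀ i, y i ∈ B₁ ↔ t i ∉ B₁) (hyload : ∀ v, #(univ.filter (y · = v)) ≤ M)
    (htdeg : ∀ v, #(univ.filter (t · = v)) ≤ DB) (hA : 3 * M + DB ≤ #A) :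
    ∃ x : Fin n → V, (∀ i, x i ∈ A) ∧
      (∀ i j, i ≠ j → (y i = y j ∨ y i = t j ∨ t i = y j ∨ t i = t j) → x i ≠ x j) ∧
      ∀ i j, (y j = y i ∨ y j = t i) → x i ≠ s j := by
  let row i := if t i ∈ B₁ then t i else y i
  let col i := if t i ∈ B₁ then y i else t i
  have hshare : ∀ i j, (y i = y j ∨ y i = t j ∨ t i = y j ∨ t i = t j) →
      row i = row j ∨ col i = col j := by
    intro i j h
    have := hy i; have := hy j
    simp only [row, col]
    split_ifs <;> grind
  have hdeg : ∀ f : Fin n → V, (∀ i, f i = y i ∨ f i = t i) →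
      ∀ v, #(univ.filter (f · = v)) ≤ M + DB := fun f hf v =>
    (card_filter_eq_le_add hf v).trans (add_le_add (hyload v) (htdeg v))
  obtain ⟨φ, hφ⟩ := exists_properEdgeColoring row col
    (hdeg row fun i => by simp only [row]; split_ifs <;> simp)
    (hdeg col fun i => by simp only [col]; split_ifs <;> simp)
  let P v := (univ.filter (y · = v)).image s
  have hP : ∀ v, #(P v) ≤ M := fun v => card_image_le.trans (hyload v)
  let L i := A \ (P (y i) ∪ P (t i))
  have hL : ∀ i, M + DB ≤ #(L i) := fun i => by
    show M + DB ≤ #(A \ _)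
    have := le_card_sdiff (P (y i) ∪ P (t i)) A
    have := card_union_le (P (y i)) (P (t i))
    have := hP (y i); have := hP (t i)
    omega
  obtain ⟨x, hxL, hx⟩ := exists_listColoring hφ L hL
  refine ⟨x, fun i => (mem_sdiff.1 (hxL i)).1,
    fun i j hij h => hx trivial trivial hij (hshare i j h), fun i j h hxs => ?_⟩
  refine (mem_sdiff.1 (hxL i)).2 (hxs ▸ ?_)
  have hj : j ∈ univ.filter (y · = y j) := mem_filter.2 ⟨mem_univ j, rfl⟩
  rcases h with h | h
  · exact mem_union_left _ (mem_image_of_mem s (h ▸ hj))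
  · exact mem_union_right _ (mem_image_of_mem s (h ▸ hj))

theorem exists_isRouting {n DB : ℕ} {A B : Finset V} (s t : Fin n → V) (hs : ∀ i, s i ∈ A)
    (ht : ∀ i, t i ∈ B) (hB : 2 ≤ #B) (hsdeg : ∀ v, #(univ.filter (s · = v)) ≤ #B / 2)
    (htdeg : ∀ v, #(univ.filter (t · = v)) ≤ DB)
    (hA : 3 * ((#B - #B / 2) * DB / (#B / 2) + 1) + DB ≤ #A) :
    ∃ y x, IsRouting A B s t y x := by
  obtain ⟨B₁, hB₁, hB₁card⟩ := exists_subset_card_eq (Nat.div_le_self #B 2)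
  have hB₂card : #(B \ B₁) = #B - #B / 2 := by rw [card_sdiff_of_subset hB₁, hB₁card]
  have hB₁pos : 0 < #B₁ := by omega
  obtain ⟨y, hyB, hyB₁, hyy, hyload⟩ :=
    exists_middle_vertices hB₁ hB₁pos (by omega) s t ht (hB₁card ▸ hsdeg) htdeg
  have hyM : ∀ v, #(univ.filter (y · = v)) ≤ #(B \ B₁) * DB / #B₁ + 1 := fun v => by
    refine Nat.le_of_lt_succ (Nat.lt_of_mul_lt_mul_left (a := #B₁) ?_)
    have := Nat.lt_mul_div_succ (#(B \ B₁) * DB) hB₁pos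
    have := hyload v
    rw [Nat.succ_eq_add_one, mul_add_one]
    omega
  obtain ⟨x, hxA, hxx, hxs⟩ := exists_outer_vertices (A := A) s t y hyB₁ hyM htdeg (by rwa [hB₂card, hB₁card])
  refine ⟨y, x, ⟨hs, ht, hyB, hxA, fun i h => ?_, hyy, hxx, hxs⟩⟩
  have := hyB₁ i
  rw [h] at this
  tauto

end Construction

section Demand

variable {A B : Finset V} {D : Multiset (Sym2 V)}

theorem IsBipartiteDemand.exists_fin_enum (hD : IsBipartiteDemand A B D) :
    ∃ (n : ℕ) (s t : Fin n → V), (∀ i, s i ∈ A) ∧ (∀ i, t i ∈ B) ∧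
      D = univ.val.map fun i => s(s i, t i) := by
  have h : ∀ i : Fin D.toList.length, ∃ a ∈ A, ∃ b ∈ B, D.toList.get i = s(a, b) :=
    fun i => hD _ (Multiset.mem_toList.1 (List.get_mem _ _))
  choose s hs t ht hst using h
  refine ⟨_, s, t, hs, ht, ?_⟩
  simp_rw [← hst]
  rw [Fin.univ_val_map, List.ofFn_get, Multiset.coe_toList]

variable [DecidableEq V] {ι : Type*} [Fintype ι]

theorem demandDegree_map (f : ι → Sym2 V) (v : V) :
    demandDegree (univ.val.map f) v = #(univ.filter (v ∈ f ·)) := by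
  rw [demandDegree, Multiset.filter_map, Multiset.card_map]
  rfl

theorem card_filter_le_demandDegree {f : ι → Sym2 V} {g : ι → V} (hg : ∀ i, g i ∈ f i) (v : V) :
    #(univ.filter (g · = v)) ≤ demandDegree (univ.val.map f) v := by
  rw [demandDegree_map]
  exact card_le_card fun i hi => mem_filter.2 ⟨mem_univ i, (mem_filter.1 hi).2 ▸ hg i⟩

theorem card_filter_le_floor {f : ι → Sym2 V} {g : ι → V} (hg : ∀ i, g i ∈ f i) {S : Finset V}
    (hgS : ∀ i, g i ∈ S) {c : ℝ} (hc : ∀ v ∈ S, (demandDegree (univ.val.map f) v : ℝ) ≤ c)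
    (v : V) : #(univ.filter (g · = v)) ≤ ⌊c⌋₊ := by
  by_cases hv : v ∈ S
  · exact Nat.le_floor ((Nat.cast_le.2 (card_filter_le_demandDegree hg v)).trans (hc v hv))
  · rw [filter_false_of_mem fun i _ (h : g i = v) => hv (h ▸ hgS i), card_empty]
    exact Nat.zero_le _

end Demand

theorem three_mul_add_le_of_mul_le_add {ε : ℝ} {a q₁ q₂ DB M : ℕ} (hq₂ : q₂ ≤ q₁ + 1)
    (hM : q₁ * M ≤ q₂ * DB + q₁) (hDB : (DB : ℝ) ≤ (1 - ε) * a / 4) (ha : 8 ≤ ε * a)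
    (hq₁ : 4 ≤ ε * q₁) : 3 * M + DB ≤ a := by
  have hq₁pos : (0 : ℝ) < q₁ := by
    rcases (Nat.cast_nonneg q₁ : (0 : ℝ) ≤ q₁).lt_or_eq with h | h
    · exact h
    · rw [← h, mul_zero] at hq₁; norm_num at hq₁
  have hq₂' : (q₂ : ℝ) ≤ q₁ + 1 := by exact_mod_cast hq₂
  have hM' : (q₁ : ℝ) * M ≤ q₂ * DB + q₁ := by exact_mod_cast hM
  have h4 : (q₁ : ℝ) * (4 * DB) ≤ q₁ * ((1 - ε) * a) := by nlinarith
  have hεa : (0 : ℝ) ≤ ε * a := by linarith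
  have hDBa : (DB : ℝ) ≤ a / 4 := by nlinarith
  have hεq : 2 * (a : ℝ) + 4 * q₁ ≤ ε * q₁ * a := by nlinarith
  have hq₂DB : (q₂ : ℝ) * DB ≤ (q₁ + 1) * DB := by nlinarith
  suffices (q₁ : ℝ) * (3 * M + DB) ≤ q₁ * a by exact_mod_cast le_of_mul_le_mul_left this hq₁pos
  nlinarith

theorem three_mul_load_add_le {ε : ℝ} {a b DB : ℕ} (hDB : (DB : ℝ) ≤ (1 - ε) * a / 4)
    (ha : 8 ≤ ε * a) (hb : 8 ≤ ε * (b - 1 : ℕ)) :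
    3 * ((b - b / 2) * DB / (b / 2) + 1) + DB ≤ a := by
  refine three_mul_add_le_of_mul_le_add (q₁ := b / 2) (q₂ := b - b / 2) (by omega) ?_ hDB ha ?_
  · rw [mul_add_one]
    exact Nat.add_le_add_right (Nat.mul_div_le _ _) _
  · have : ((b - 1 : ℕ) : ℝ) ≤ 2 * (b / 2 : ℕ) := by exact_mod_cast (by omega : b - 1 ≤ 2 * (b / 2))
    nlinarith

theorem le_mul_of_ceil_div_le {ε c : ℝ} (hε : 0 < ε) {k : ℕ} (hk : ⌈c / ε⌉₊ ≤ k) : c ≤ ε * k :=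
  (div_le_iff₀' hε).1 (Nat.ceil_le.1 hk)

/-- Theorem 2 of the paper: for every `ε ∈ (0,1)` there is `N`
such that every bipartite demand graph on classes `A`, `B` of sizes `≥ N` with
all degrees in `A` at most `(1-ε)|B|/4` and all degrees in `B` at most
`(1-ε)|A|/4` is resolvable in the complete bipartite graph `K_{A,B}`. -/
theorem degree_version (ε : ℝ) (hε0 : 0 < ε) (hε1 : ε < 1) :
    ∃ N : ℕ, ∀ (V : Type) [DecidableEq V] (A B : Finset V)
      (D : Multiset (Sym2 V)),
      Disjoint A B → N ≤ A.card → N ≤ B.card →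
      IsBipartiteDemand A B D →
      (∀ x ∈ A, (demandDegree D x : ℝ) ≤ (1 - ε) * (B.card : ℝ) / 4) →
      (∀ y ∈ B, (demandDegree D y : ℝ) ≤ (1 - ε) * (A.card : ℝ) / 4) →
      IsResolvable (completeBipartite A B) D := by
  refine ⟨⌈8 / ε⌉₊ + 1, fun V _ A B D hAB hA hB hD hdegA hdegB => ?_⟩
  obtain ⟨n, s, t, hs, ht, rfl⟩ := hD.exists_fin_enum
  have hN : 0 < ⌈8 / ε⌉₊ := Nat.ceil_pos.2 (by positivity)
  have hεa : 8 ≤ ε * #A := le_mul_of_ceil_div_le hε0 (by omega)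
  have hεb : 8 ≤ ε * (#B - 1 : ℕ) := le_mul_of_ceil_div_le hε0 (by omega)
  have hDA : ⌊(1 - ε) * #B / 4⌋₊ ≤ #B / 2 :=
    calc ⌊(1 - ε) * #B / 4⌋₊ ≤ ⌊(#B : ℝ) / 4⌋₊ := Nat.floor_le_floor (by
          gcongr; exact mul_le_of_le_one_left (Nat.cast_nonneg _) (by linarith))
      _ = #B / 4 := by rw [Nat.floor_div_ofNat, Nat.floor_natCast]
      _ ≤ #B / 2 := by omega
  have hsdeg v := (card_filter_le_floor (fun i => Sym2.mem_mk_left _ (t i)) hs hdegA v).trans hDA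
  have htdeg := card_filter_le_floor (fun i => Sym2.mem_mk_right (s i) _) ht hdegB
  have hDB : (⌊(1 - ε) * #A / 4⌋₊ : ℝ) ≤ (1 - ε) * #A / 4 :=
    Nat.floor_le (div_nonneg (mul_nonneg (by linarith) (Nat.cast_nonneg _)) zero_le_four)
  obtain ⟨y, x, hR⟩ :=
    exists_isRouting s t hs ht (by omega) hsdeg htdeg (three_mul_load_add_le hDB hεa hεb)
  exact hR.isResolvable hAB
end

section
/- Let n ≥ 2 and let A = {a₁, …, aₙ} and B = {b₁, …, bₙ} be disjoint sets of size n. Let D be the demand graph on (A, B) consisting of n parallel demand edges joining a₁ and b₁, n − 1 parallel demand edges joining a₂ and b₂, and no other demand edges (so D has 2n − 1 demand edges and Δ(D) = n). Then D is not resolvable in the complete bipartite graph K_{A,B}. -/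
variable {V : Type*}

/-!
In `K_{A,B}` the vertex `a₁` has degree `n` and is the endpoint of `n` demands, and each path
leaves its endpoints through at least one edge, so every edge at `a₁`, in particular `a₁b₂`,
lies on one of the paths. A trail passes through each of its internal vertices using two edges
there. If the path through `a₁b₂` serves an `a₁b₁` demand, then `b₂` is internal to it and meets
at least `(n - 1) + 2` path edges; if it serves an `a₂b₂` demand, then `a₁` is internal and meets
at least `n + 2`. Both exceed the degree `n`.
-/

theorem List.countP_mem_le_card [DecidableEq V] {L : List (Sym2 V)} (hL : L.Nodup) {x : V}
    {S : Finset V} (hS : ∀ w, s(x, w) ∈ L → w ∈ S) : L.countP (x ∈ ·) ≤ S.card := by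
  rw [List.countP_eq_length_filter, ← List.toFinset_card_of_nodup (hL.filter _)]
  calc _ ≤ (S.image fun w => s(x, w)).card := Finset.card_le_card fun e he => by
          simp only [List.mem_toFinset, List.mem_filter, decide_eq_true_eq] at he
          obtain ⟨w, rfl⟩ := Sym2.mem_iff_exists.mp he.2
          exact Finset.mem_image_of_mem _ (hS w he.1)
    _ ≤ S.card := Finset.card_image_le

namespace SimpleGraph

variable {G : SimpleGraph V}

theorem mem_right_of_completeBipartite_adj {A B : Finset V} {x w : V} (hx : x ∉ B)
    (h : (completeBipartite A B).Adj x w) : w ∈ B :=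
  h.2.elim And.right fun h' => absurd h'.1 hx

theorem mem_left_of_completeBipartite_adj {A B : Finset V} {x w : V} (hx : x ∉ A)
    (h : (completeBipartite A B).Adj x w) : w ∈ A :=
  h.2.elim (fun h' => absurd h'.1 hx) And.right

namespace Walk.IsTrail

variable [DecidableEq V] {u v : V} {w : G.Walk u v}

theorem one_le_countP_edges_of_mem (ht : w.IsTrail) (huv : u ≠ v) {x : V} (hx : x ∈ s(u, v)) :
    1 ≤ w.edges.countP (x ∈ ·) := by
  rw [Nat.one_le_iff_ne_zero]
  intro h0
  have := (ht.even_countP_edges_iff x).mp (h0 ▸ Even.zero) huv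
  rcases Sym2.mem_iff.mp hx with rfl | rfl <;> simp_all

theorem two_le_countP_edges_of_not_mem (ht : w.IsTrail) {x : V} (hx : x ∉ s(u, v))
    {e : Sym2 V} (he : e ∈ w.edges) (hxe : x ∈ e) : 2 ≤ w.edges.countP (x ∈ ·) := by
  have heven := (ht.even_countP_edges_iff x).mpr fun _ => by simpa [not_or] using hx
  have hpos : 0 < w.edges.countP (x ∈ ·) := List.countP_pos_iff.mpr ⟨e, he, by simpa using hxe⟩
  obtain ⟨k, hk⟩ := heven
  omega

end Walk.IsTrail

variable {l : List ((u : V) × (v : V) × G.Walk u v)}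

def walksEdges (l : List ((u : V) × (v : V) × G.Walk u v)) : List (Sym2 V) :=
  l.flatMap fun p => p.2.2.edges

@[simp]
theorem walksEdges_cons (p : (u : V) × (v : V) × G.Walk u v) :
    walksEdges (p :: l) = p.2.2.edges ++ walksEdges l :=
  List.flatMap_cons

theorem nodup_walksEdges (ht : ∀ p ∈ l, p.2.2.IsTrail)
    (hdisj : l.Pairwise fun p q => ∀ e ∈ p.2.2.edges, e ∉ q.2.2.edges) :
    (walksEdges l).Nodup :=
  List.nodup_flatMap.mpr ⟨fun p hp => (ht p hp).edges_nodup, hdisj.imp fun h => h⟩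

theorem mem_edgeSet_of_mem_walksEdges {e : Sym2 V} (he : e ∈ walksEdges l) : e ∈ G.edgeSet := by
  obtain ⟨p, -, he⟩ := List.mem_flatMap.mp he
  exact p.2.2.edges_subset_edgeSet he

end SimpleGraph

open SimpleGraph

section DemandDegree

variable [DecidableEq V]

theorem demandDegree_cons (e : Sym2 V) (D : Multiset (Sym2 V)) (x : V) :
    demandDegree (e ::ₘ D) x = demandDegree D x + if x ∈ e then 1 else 0 := by
  unfold demandDegree
  split_ifs with hx <;> simp [hx]

variable {G : SimpleGraph V} {l : List ((u : V) × (v : V) × G.Walk u v)}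

theorem demandDegree_le_countP_walksEdges (ht : ∀ p ∈ l, p.2.2.IsTrail)
    (hloop : ∀ p ∈ l, p.1 ≠ p.2.1) (x : V) :
    demandDegree ↑(l.map fun p => s(p.1, p.2.1)) x ≤ (walksEdges l).countP (x ∈ ·) := by
  induction l with
  | nil => simp [demandDegree, walksEdges]
  | cons p l ih =>
    have hl := ih (fun q hq => ht q (.tail _ hq)) (fun q hq => hloop q (.tail _ hq))
    rw [List.map_cons, ← Multiset.cons_coe, demandDegree_cons, walksEdges_cons,
      List.countP_append]
    split_ifs with hx
    · have := (ht p (.head _)).one_le_countP_edges_of_mem (hloop p (.head _)) hx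
      omega
    · omega

theorem demandDegree_add_two_le_countP_walksEdges (ht : ∀ p ∈ l, p.2.2.IsTrail)
    (hloop : ∀ p ∈ l, p.1 ≠ p.2.1) {x : V} {p₀ : (u : V) × (v : V) × G.Walk u v} (hp₀ : p₀ ∈ l)
    (hx : x ∉ s(p₀.1, p₀.2.1)) {e : Sym2 V} (he : e ∈ p₀.2.2.edges) (hxe : x ∈ e) :
    demandDegree ↑(l.map fun p => s(p.1, p.2.1)) x + 2 ≤ (walksEdges l).countP (x ∈ ·) := by
  induction l with
  | nil => simp at hp₀
  | cons p l ih =>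
    have ht' := fun q hq => ht q (.tail _ hq)
    have hloop' := fun q hq => hloop q (.tail _ hq)
    rw [List.map_cons, ← Multiset.cons_coe, demandDegree_cons, walksEdges_cons,
      List.countP_append]
    rcases List.mem_cons.mp hp₀ with rfl | hp₀
    · have := (ht p₀ (.head _)).two_le_countP_edges_of_not_mem hx he hxe
      have := demandDegree_le_countP_walksEdges ht' hloop' x
      simp only [hx, if_false]
      omega
    · have := ih ht' hloop' hp₀
      split_ifs with hpx
      · have := (ht p (.head _)).one_le_countP_edges_of_mem (hloop p (.head _)) hpx
        omega
      · omega

theorem demandDegree_add (D D' : Multiset (Sym2 V)) (x : V) :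
    demandDegree (D + D') x = demandDegree D x + demandDegree D' x := by
  simp [demandDegree, Multiset.filter_add]

theorem demandDegree_replicate (k : ℕ) (e : Sym2 V) (x : V) :
    demandDegree (Multiset.replicate k e) x = if x ∈ e then k else 0 := by
  unfold demandDegree
  split_ifs with hx
  · rw [Multiset.filter_eq_self.mpr fun _ he => Multiset.eq_of_mem_replicate he ▸ hx,
      Multiset.card_replicate]
  · rw [Multiset.filter_eq_nil.mpr fun _ he => Multiset.eq_of_mem_replicate he ▸ hx,
      Multiset.card_zero]

theorem not_isResolvable_of_saturated_adj {G : SimpleGraph V} {D : Multiset (Sym2 V)}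
    (hloop : ∀ e ∈ D, ¬ e.IsDiag) {x y : V} (hxy : G.Adj x y) (hsep : ∀ e ∈ D, x ∉ e ∨ y ∉ e)
    {S T : Finset V} (hS : ∀ w, G.Adj x w → w ∈ S) (hT : ∀ w, G.Adj y w → w ∈ T)
    (hx : S.card ≤ demandDegree D x) (hy : T.card < demandDegree D y + 2) :
    ¬ IsResolvable G D := by
  rintro ⟨l, rfl, hpath, hdisj⟩
  have ht : ∀ p ∈ l, p.2.2.IsTrail := fun p hp => (hpath p hp).isTrail
  have hdemand : ∀ p ∈ l, s(p.1, p.2.1) ∈ (↑(l.map fun p => s(p.1, p.2.1)) : Multiset _) :=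
    fun p hp => Multiset.mem_coe.mpr (List.mem_map_of_mem hp)
  have hloop' : ∀ p ∈ l, p.1 ≠ p.2.1 :=
    fun p hp h => hloop _ (hdemand p hp) (Sym2.mk_isDiag_iff.mpr h)
  have hL := nodup_walksEdges ht hdisj
  have hload : ∀ {z : V} {U : Finset V}, (∀ w, G.Adj z w → w ∈ U) →
      (walksEdges l).countP (z ∈ ·) ≤ U.card :=
    fun hU => List.countP_mem_le_card hL fun w h => hU w (mem_edgeSet_of_mem_walksEdges h)
  obtain ⟨p, hp, hused⟩ : ∃ p ∈ l, s(x, y) ∈ p.2.2.edges := by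
    by_contra! hunused
    have hle : (walksEdges l).countP (x ∈ ·) ≤ (S.erase y).card := by
      refine List.countP_mem_le_card hL fun w h => Finset.mem_erase.mpr
        ⟨?_, hS w (mem_edgeSet_of_mem_walksEdges h)⟩
      rintro rfl
      obtain ⟨p, hp, he⟩ := List.mem_flatMap.mp h
      exact hunused p hp he
    have := Finset.card_erase_lt_of_mem (hS y hxy)
    have := demandDegree_le_countP_walksEdges ht hloop' x
    omega
  rcases hsep _ (hdemand p hp) with hxp | hyp
  · have := demandDegree_add_two_le_countP_walksEdges ht hloop' hp hxp hused
      (Sym2.mem_mk_left x y)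
    have := hload hS
    omega
  · have := demandDegree_add_two_le_countP_walksEdges ht hloop' hp hyp hused
      (Sym2.mem_mk_right x y)
    have := hload hT
    omega

end DemandDegree

/-- sharpness of Theorem 4: the demand graph with `n` parallel
edges joining `a₁b₁` and `n - 1` parallel edges joining `a₂b₂` (and `2n - 4`
isolated vertices) is not resolvable in `K_{n,n}`. -/
theorem edge_version_sharp [DecidableEq V] (n : ℕ) (hn : 2 ≤ n)
    (a b : Fin n → V) (ha : Function.Injective a) (hb : Function.Injective b)
    (hab : ∀ i j, a i ≠ b j) :
    ¬ IsResolvable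
        (completeBipartite (Finset.univ.image a) (Finset.univ.image b))
        (Multiset.replicate n s(a ⟨0, by omega⟩, b ⟨0, by omega⟩) +
          Multiset.replicate (n - 1) s(a ⟨1, by omega⟩, b ⟨1, by omega⟩)) := by
  set a₁ := a ⟨0, by omega⟩
  set a₂ := a ⟨1, by omega⟩
  set b₁ := b ⟨0, by omega⟩
  set b₂ := b ⟨1, by omega⟩
  have ha₁₂ : a₁ ≠ a₂ := ha.ne (by simp [Fin.ext_iff])
  have hb₁₂ : b₁ ≠ b₂ := hb.ne (by simp [Fin.ext_iff])
  have ha₁b₂ : a₁ ≠ b₂ := hab _ _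
  have hD : ∀ e ∈ Multiset.replicate n s(a₁, b₁) + Multiset.replicate (n - 1) s(a₂, b₂),
      e = s(a₁, b₁) ∨ e = s(a₂, b₂) := fun e he =>
    (Multiset.mem_add.mp he).imp Multiset.eq_of_mem_replicate Multiset.eq_of_mem_replicate
  refine not_isResolvable_of_saturated_adj (x := a₁) (y := b₂) (S := Finset.univ.image b)
    (T := Finset.univ.image a) ?_ ⟨ha₁b₂, .inl ⟨by simp [a₁], by simp [b₂]⟩⟩ ?_
    (fun _ => mem_right_of_completeBipartite_adj (by simpa using fun j => (hab _ j).symm))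
    (fun _ => mem_left_of_completeBipartite_adj (by simpa using fun i => hab i _)) ?_ ?_
  · intro e he
    rcases hD e he with rfl | rfl <;> simpa using hab _ _
  · intro e he
    rcases hD e he with rfl | rfl <;> simp [ha₁b₂.symm, hb₁₂.symm, ha₁₂, ha₁b₂]
  · simp [demandDegree_add, demandDegree_replicate, ha₁₂, ha₁b₂,
      Finset.card_image_of_injective _ hb]
  · simp [demandDegree_add, demandDegree_replicate, hb₁₂.symm, ha₁b₂.symm,
      Finset.card_image_of_injective _ ha]
    omega
end

section
/- Let n ≥ 1 and let A = {a₁, …, aₙ} and B = {b₁, …, bₙ} be disjoint sets of size n. Let D be the demand graph on (A, B) in which, for each 1 ≤ i ≤ n, the vertices aᵢ and bᵢ are joined by exactly ⌈n/3⌉ + 1 parallel demand edges, and there are no other demand edges. Then D is not resolvable in the complete bipartite graph K_{A,B}. -/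
variable {V : Type*}

/-!
Every path of `K_{A,B}` joining `aᵢ` to `bᵢ` has odd length, hence length `1` or at least `3`.
Edge-disjoint paths of length `1` use distinct demand pairs, so at most `n` of the
`n (⌈n/3⌉ + 1)` paths are that short, and the paths together use at least
`3 n (⌈n/3⌉ + 1) - 2n ≥ n² + n` edges, more than the `n²` edges of `K_{n,n}`.
-/

open Finset SimpleGraph

theorem List.three_mul_length_le_sum_add_countP {α : Type*} (f : α → ℕ) (l : List α)
    (hf : ∀ x ∈ l, Odd (f x)) :
    3 * l.length ≤ (l.map f).sum + 2 * l.countP (f · = 1) := by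
  induction l with
  | nil => simp
  | cons x l ih =>
    have ih := ih fun y hy => hf y (List.mem_cons_of_mem _ hy)
    obtain ⟨k, hk⟩ := hf x List.mem_cons_self
    simp only [List.length_cons, List.map_cons, List.sum_cons, List.countP_cons]
    split_ifs <;> simp_all <;> omega

namespace SimpleGraph

variable {G : SimpleGraph V}

theorem Walk.edges_eq_singleton_of_length_eq_one {u v : V} {w : G.Walk u v}
    (h : w.length = 1) : w.edges = [s(u, v)] := by
  cases w with
  | nil => simp at h
  | cons _ w' => cases w' with
    | nil => simp
    | cons _ _ => simp at h

variable (l : List ((u : V) × (v : V) × G.Walk u v))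

theorem sum_length_le_card_of_pairwise_disjoint_edges (E : Finset (Sym2 V))
    (hE : G.edgeSet ⊆ E) (hpath : ∀ p ∈ l, p.2.2.IsPath)
    (hdisj : l.Pairwise fun p q => ∀ e ∈ p.2.2.edges, e ∉ q.2.2.edges) :
    (l.map fun p => p.2.2.length).sum ≤ #E := by
  classical
  have hnodup : (l.flatMap fun p => p.2.2.edges).Nodup :=
    List.nodup_flatMap.2 ⟨fun p hp => (hpath p hp).edges_nodup, hdisj⟩
  calc (l.map fun p => p.2.2.length).sum
      = (l.flatMap fun p => p.2.2.edges).length := by simp [List.length_flatMap]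
    _ = #(l.flatMap fun p => p.2.2.edges).toFinset := (List.toFinset_card_of_nodup hnodup).symm
    _ ≤ #E := card_le_card fun e he => by
      obtain ⟨p, -, hep⟩ := List.mem_flatMap.1 (List.mem_toFinset.1 he)
      exact hE (p.2.2.edges_subset_edgeSet hep)

theorem countP_length_eq_one_le_card_endpoints [DecidableEq V]
    (hdisj : l.Pairwise fun p q => ∀ e ∈ p.2.2.edges, e ∉ q.2.2.edges) :
    l.countP (fun p => p.2.2.length = 1) ≤ #(l.map fun p => s(p.1, p.2.1)).toFinset := by
  set short := l.filter fun p => p.2.2.length = 1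
  -- two edge-disjoint walks of length one cannot join the same pair of vertices
  have hnodup : (short.map fun p => s(p.1, p.2.1)).Nodup := by
    refine List.Pairwise.map _ (fun p q h => h) ?_
    refine (hdisj.sublist List.filter_sublist).imp_of_mem fun hp hq hpq heq => ?_
    simp only [short, List.mem_filter, decide_eq_true_eq] at hp hq
    rw [Walk.edges_eq_singleton_of_length_eq_one hp.2] at hpq
    rw [Walk.edges_eq_singleton_of_length_eq_one hq.2, ← heq] at hpq
    simp at hpq
  calc l.countP (fun p => p.2.2.length = 1)
      = #(short.map fun p => s(p.1, p.2.1)).toFinset := by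
        rw [List.toFinset_card_of_nodup hnodup, List.length_map, List.countP_eq_length_filter]
    _ ≤ #(l.map fun p => s(p.1, p.2.1)).toFinset :=
        card_le_card fun e he => by
          simp only [List.mem_toFinset] at he ⊢
          exact (List.filter_sublist.map _).subset he

theorem Coloring.odd_length_of_adj {G : SimpleGraph V} (c : G.Coloring Bool) {u v : V}
    (h : G.Adj u v) (w : G.Walk u v) : Odd w.length := by
  rw [c.odd_length_iff_not_congr, ← not_iff, ← Bool.eq_iff_iff]
  exact c.valid h

end SimpleGraph

theorem Multiset.exists_eq_of_mem_sum_replicate {ι α : Type*} {s : Finset ι} {c : ℕ}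
    {e : ι → α} {x : α} (h : x ∈ ∑ i ∈ s, replicate c (e i)) : ∃ i ∈ s, x = e i := by
  obtain ⟨i, hi, hx⟩ := Multiset.mem_sum.1 h
  exact ⟨i, hi, eq_of_mem_replicate hx⟩

theorem Multiset.card_toFinset_sum_replicate_le {ι α : Type*} [DecidableEq α] (s : Finset ι)
    (c : ℕ) (e : ι → α) : #(∑ i ∈ s, replicate c (e i)).toFinset ≤ #s := by
  refine (Finset.card_le_card fun x hx => ?_).trans (card_image_le (s := s) (f := e))
  obtain ⟨i, hi, rfl⟩ := exists_eq_of_mem_sum_replicate (mem_toFinset.1 hx)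
  exact mem_image_of_mem e hi

theorem IsResolvable.three_mul_card_le [DecidableEq V] {G : SimpleGraph V}
    {D : Multiset (Sym2 V)} (hD : IsResolvable G D) (c : G.Coloring Bool)
    (hDG : ∀ e ∈ D, e ∈ G.edgeSet) (E : Finset (Sym2 V)) (hE : G.edgeSet ⊆ E) :
    3 * Multiset.card D ≤ #E + 2 * #D.toFinset := by
  obtain ⟨l, rfl, hpath, hdisj⟩ := hD
  have hlen := l.three_mul_length_le_sum_add_countP (fun p => p.2.2.length) fun p hp =>
    c.odd_length_of_adj (hDG _ (Multiset.mem_coe.2 (List.mem_map_of_mem hp))) p.2.2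
  have hsum := sum_length_le_card_of_pairwise_disjoint_edges l E hE hpath hdisj
  have hshort := countP_length_eq_one_le_card_endpoints l hdisj
  simp only [Multiset.coe_card, List.length_map, List.toFinset_coe] at hlen ⊢
  omega

def completeBipartite.coloring [DecidableEq V] {A B : Finset V} (hAB : Disjoint A B) :
    (completeBipartite A B).Coloring Bool :=
  Coloring.mk (fun v => decide (v ∈ A)) fun {u v} h => by
    rcases h.2 with ⟨hu, hv⟩ | ⟨hu, hv⟩ <;>
      simp [hu, hv, Finset.disjoint_right.1 hAB]

theorem completeBipartite.exists_superset_edgeSet [DecidableEq V] (A B : Finset V) :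
    ∃ E : Finset (Sym2 V), (completeBipartite A B).edgeSet ⊆ E ∧ #E ≤ #A * #B := by
  refine ⟨(A ×ˢ B).image fun q => s(q.1, q.2), fun e he => ?_,
    card_image_le.trans (card_product A B).le⟩
  induction e using Sym2.ind with
  | _ u v =>
    rcases he.2 with ⟨hu, hv⟩ | ⟨hu, hv⟩
    · exact mem_image.2 ⟨(u, v), mem_product.2 ⟨hu, hv⟩, rfl⟩
    · exact mem_image.2 ⟨(v, u), mem_product.2 ⟨hv, hu⟩, Sym2.eq_swap⟩

theorem conjecture_sharp_general [DecidableEq V] (n : ℕ) (hn : 1 ≤ n)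
    (a b : Fin n → V)
    (hab : ∀ i j, a i ≠ b j) :
    ¬ IsResolvable
        (completeBipartite (Finset.univ.image a) (Finset.univ.image b))
        (∑ i : Fin n, Multiset.replicate ((n + 2) / 3 + 1) s(a i, b i)) := by
  set c := (n + 2) / 3 + 1
  intro hD
  have hAB : Disjoint (univ.image a) (univ.image b) := by
    simp only [Finset.disjoint_left, mem_image, mem_univ, true_and, not_exists]
    rintro _ ⟨i, rfl⟩ j
    exact (hab i j).symm
  have hDG : ∀ e ∈ ∑ i : Fin n, Multiset.replicate c s(a i, b i),
      e ∈ (completeBipartite (univ.image a) (univ.image b)).edgeSet := fun e he => by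
    obtain ⟨i, -, rfl⟩ := Multiset.exists_eq_of_mem_sum_replicate he
    exact ⟨hab i i, .inl ⟨mem_image_of_mem a (mem_univ i), mem_image_of_mem b (mem_univ i)⟩⟩
  obtain ⟨E, hE, hEcard⟩ := completeBipartite.exists_superset_edgeSet (univ.image a) (univ.image b)
  have hbound := hD.three_mul_card_le (completeBipartite.coloring hAB) hDG E hE
  have hsupport := Multiset.card_toFinset_sum_replicate_le univ c fun i => s(a i, b i)
  have hA : #(univ.image a) ≤ n := card_image_le.trans (by simp)
  have hB : #(univ.image b) ≤ n := card_image_le.trans (by simp)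
  simp only [Multiset.card_sum, Multiset.card_replicate, sum_const, card_univ, Fintype.card_fin,
    smul_eq_mul] at hbound hsupport
  have : n * (n + 3) ≤ n * (3 * c) := Nat.mul_le_mul_left n (by omega)
  nlinarith [Nat.mul_le_mul hA hB]

/-- sharpness of Conjecture 1: the demand graph consisting of
`n` disjoint pairs `aᵢbᵢ`, each joined by `⌈n/3⌉ + 1` parallel demand edges,
is not resolvable in `K_{n,n}`.  (Here `⌈n/3⌉ = (n + 2) / 3` in `ℕ`.) -/
theorem conjecture_sharp [DecidableEq V] (n : ℕ) (hn : 1 ≤ n)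
    (a b : Fin n → V) (ha : Function.Injective a) (hb : Function.Injective b)
    (hab : ∀ i j, a i ≠ b j) :
    ¬ IsResolvable
        (completeBipartite (Finset.univ.image a) (Finset.univ.image b))
        (∑ i : Fin n, Multiset.replicate ((n + 2) / 3 + 1) s(a i, b i)) :=
  conjecture_sharp_general n hn a b hab
end

section
/- Let A and B be disjoint finite sets, let D be a demand graph on (A, B), and let u, x ∈ A and v, y ∈ B be four distinct vertices such that D contains a demand edge e joining u and v. Let D′ be the demand graph obtained from D by deleting one copy of e and adding one demand edge joining u and y, one joining x and y, and one joining x and v (the edge-lifting of e to xy). If D′ is resolvable in the complete bipartite graph K_{A,B}, then D is resolvable in K_{A,B}. -/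
variable {V : Type*}

/-!
Edge-lifting can be undone: in a resolution of the lifted demand graph, the paths serving
`uy`, `yx` and `xv` concatenate to a `u`–`v` walk, and shortcutting it to a path only uses
edges of those three paths, so it stays edge-disjoint from the paths of all other demands.
-/

theorem List.exists_perm_cons_of_coe_map_eq_cons {α β : Type*} {f : α → β} {l : List α}
    {b : β} {t : Multiset β} (h : (↑(l.map f) : Multiset β) = b ::ₘ t) :
    ∃ a l', l.Perm (a :: l') ∧ f a = b ∧ (↑(l'.map f) : Multiset β) = t := by
  classical
  rw [← Multiset.map_coe, ← Multiset.map_eq_cons] at h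
  obtain ⟨a, ha, rfl, rfl⟩ := h
  exact ⟨a, l.erase a, List.perm_cons_erase ha, rfl, by simp⟩

theorem SimpleGraph.Walk.exists_edges_subset_of_sym2_eq {G : SimpleGraph V} {a b c d : V}
    (w : G.Walk a b) (h : s(a, b) = s(c, d)) : ∃ w' : G.Walk c d, w'.edges ⊆ w.edges := by
  rcases Sym2.eq_iff.mp h with ⟨rfl, rfl⟩ | ⟨rfl, rfl⟩
  · exact ⟨w, List.Subset.refl _⟩
  · exact ⟨w.reverse, fun e he => by simpa using he⟩

theorem IsResolvable.join_demands [DecidableEq V] {G : SimpleGraph V} {a b c : V}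
    {M : Multiset (Sym2 V)}
    (h : IsResolvable G (s(a, b) ::ₘ s(b, c) ::ₘ M)) : IsResolvable G (s(a, c) ::ₘ M) := by
  obtain ⟨l, hmap, hpath, hdisj⟩ := h
  obtain ⟨p, l₁, hl, hp, hmap₁⟩ := List.exists_perm_cons_of_coe_map_eq_cons hmap
  obtain ⟨q, l₂, hl₁, hq, hmap₂⟩ := List.exists_perm_cons_of_coe_map_eq_cons hmap₁
  have hperm : l.Perm (p :: q :: l₂) := hl.trans (hl₁.cons p)
  have hdisj' := (hperm.pairwise_iff fun h e he he' => h e he' he).mp hdisj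
  simp only [List.pairwise_cons, List.mem_cons, forall_eq_or_imp] at hdisj'
  obtain ⟨⟨-, hpl₂⟩, hql₂, hl₂⟩ := hdisj'
  obtain ⟨wp, hwp⟩ := p.2.2.exists_edges_subset_of_sym2_eq hp
  obtain ⟨wq, hwq⟩ := q.2.2.exists_edges_subset_of_sym2_eq hq
  have hedges : ∀ e ∈ (wp.append wq).bypass.edges, e ∈ p.2.2.edges ∨ e ∈ q.2.2.edges := by
    intro e he
    have := (wp.append wq).edges_bypass_subset_edges he
    rw [SimpleGraph.Walk.edges_append, List.mem_append] at this
    exact this.imp (@hwp e) (@hwq e)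
  refine ⟨⟨a, c, (wp.append wq).bypass⟩ :: l₂,
    by rw [List.map_cons, ← Multiset.cons_coe, hmap₂], ?_, ?_⟩
  · intro r hr
    rcases List.mem_cons.mp hr with rfl | hr
    · exact SimpleGraph.Walk.bypass_isPath _
    · exact hpath r (hperm.symm.subset (List.mem_cons_of_mem _ (List.mem_cons_of_mem _ hr)))
  · refine List.pairwise_cons.mpr ⟨fun r hr e he => ?_, hl₂⟩
    rcases hedges e he with hep | heq
    · exact hpl₂ r hr e hep
    · exact hql₂ r hr e heq

theorem edge_lifting_resolvable_general [DecidableEq V] (A B : Finset V)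
    (D : Multiset (Sym2 V))
    (u x : V)
    (v y : V)
    (he : s(u, v) ∈ D)
    (hres : IsResolvable (completeBipartite A B)
      (s(u, y) ::ₘ s(x, y) ::ₘ s(x, v) ::ₘ D.erase s(u, v))) :
    IsResolvable (completeBipartite A B) D := by
  rw [Sym2.eq_swap (a := x)] at hres
  simpa only [Multiset.cons_erase he] using hres.join_demands.join_demands

/-- if the demand graph obtained from `D` by edge-lifting a
demand edge `s(u, v)` to `xy` (with `u, x ∈ A`, `v, y ∈ B` four distinct
vertices) is resolvable in `K_{A,B}`, then so is `D`. -/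
theorem edge_lifting_resolvable [DecidableEq V] (A B : Finset V)
    (hAB : Disjoint A B)
    (D : Multiset (Sym2 V)) (hD : IsBipartiteDemand A B D)
    (u x : V) (hu : u ∈ A) (hx : x ∈ A) (hux : u ≠ x)
    (v y : V) (hv : v ∈ B) (hy : y ∈ B) (hvy : v ≠ y)
    (he : s(u, v) ∈ D)
    (hres : IsResolvable (completeBipartite A B)
      (s(u, y) ::ₘ s(x, y) ::ₘ s(x, v) ::ₘ D.erase s(u, v))) :
    IsResolvable (completeBipartite A B) D :=
  edge_lifting_resolvable_general A B D u x v y he hres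
end

section
/- Let G be a simple graph and D a demand graph on V(G). Then D is resolvable in G if and only if there exists a finite sequence of lifting operations which, applied successively to D, yields a demand graph whose demand edges are pairwise distinct and each of which is an edge of G (i.e. a simple subgraph of G). -/
/-!
A family of edge-disjoint paths resolving `D` is undone, path by path, by liftings: the demand
edge `s(u, v)` served by a path `u = v₀, v₁, …, vₖ = v` is lifted successively through
`v₁, …, vₖ₋₁`, which replaces it by the edges of the path. The edges of all the paths are
pairwise distinct, so the result is a simple subgraph of `G`. Conversely a simple subgraph of `G`
is resolved by one-edge paths, and a lifting never destroys resolvability: paths serving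
`s(x, z)` and `s(z, y)` concatenate to a walk from `x` to `y`, which contains a path using no
other edges.
-/

variable {V : Type*}

/-- A single lifting operation on a demand graph: delete one copy of a demand
edge `s(x, y)` and add the two demand edges `s(x, z)` and `s(z, y)`, for a
vertex `z ∉ {x, y}`. -/
def LiftStep [DecidableEq V] (D D' : Multiset (Sym2 V)) : Prop :=
  ∃ x y z : V, s(x, y) ∈ D ∧ z ≠ x ∧ z ≠ y ∧
    D' = s(x, z) ::ₘ s(z, y) ::ₘ D.erase s(x, y)

open Relation SimpleGraph

section Lifting

variable [DecidableEq V]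

theorem LiftStep.add_left {D D' : Multiset (Sym2 V)} (h : LiftStep D D') (N : Multiset (Sym2 V)) :
    LiftStep (N + D) (N + D') := by
  obtain ⟨x, y, z, hmem, hzx, hzy, rfl⟩ := h
  refine ⟨x, y, z, Multiset.mem_add.2 (Or.inr hmem), hzx, hzy, ?_⟩
  rw [Multiset.erase_add_right_pos _ hmem, Multiset.add_cons, Multiset.add_cons]

theorem LiftStep.add_right {D D' : Multiset (Sym2 V)} (h : LiftStep D D') (N : Multiset (Sym2 V)) :
    LiftStep (D + N) (D' + N) := by
  simpa only [add_comm _ N] using h.add_left N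

theorem reflTransGen_liftStep_add {A A' B B' : Multiset (Sym2 V)}
    (hA : ReflTransGen LiftStep A A') (hB : ReflTransGen LiftStep B B') :
    ReflTransGen LiftStep (A + B) (A' + B') :=
  (hA.lift (· + B) fun _ _ h => h.add_right B).trans (hB.lift (A' + ·) fun _ _ h => h.add_left A')

theorem SimpleGraph.Walk.IsPath.reflTransGen_liftStep_edges {G : SimpleGraph V} {u v : V}
    {p : G.Walk u v} (hp : p.IsPath) (huv : u ≠ v) :
    ReflTransGen LiftStep {s(u, v)} (p.edges : Multiset (Sym2 V)) := by
  induction p with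
  | nil => exact absurd rfl huv
  | @cons u a v hadj t ih =>
    rw [Walk.edges_cons, ← Multiset.cons_coe, ← Multiset.singleton_add]
    obtain rfl | hav := eq_or_ne a v
    · rw [(Walk.isPath_iff_nil.1 hp.of_cons).eq_nil, Walk.edges_nil, Multiset.coe_nil, add_zero]
    · have hsplit : LiftStep {s(u, v)} ({s(u, a)} + {s(a, v)}) :=
        ⟨u, v, a, Multiset.mem_singleton_self _, hadj.ne', hav, by simp⟩
      exact .head hsplit (reflTransGen_liftStep_add .refl (ih hp.of_cons hav))

end Lifting

namespace SimpleGraph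

abbrev SigmaWalk (G : SimpleGraph V) := (u : V) × (v : V) × G.Walk u v

variable {G : SimpleGraph V}

def SigmaWalk.ends (p : G.SigmaWalk) : Sym2 V := s(p.1, p.2.1)

def SigmaWalk.edges (p : G.SigmaWalk) : Multiset (Sym2 V) := p.2.2.edges

theorem Walk.exists_edges_subset_of_sym2_eq_s8 {a b c d : V} (w : G.Walk a b)
    (h : s(a, b) = s(c, d)) : ∃ w' : G.Walk c d, w'.edges ⊆ w.edges := by
  rcases Sym2.eq_iff.1 h with ⟨rfl, rfl⟩ | ⟨rfl, rfl⟩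
  · exact ⟨w, List.Subset.refl _⟩
  · exact ⟨w.reverse, by simp [Walk.edges_reverse]⟩

theorem reflTransGen_liftStep_map_ends_bind_edges [DecidableEq V] (S : Multiset G.SigmaWalk)
    (hS : ∀ p ∈ S, p.2.2.IsPath ∧ p.1 ≠ p.2.1) :
    ReflTransGen LiftStep (S.map SigmaWalk.ends) (S.bind SigmaWalk.edges) := by
  induction S using Multiset.induction_on with
  | empty => exact .refl
  | cons p S ih =>
    rw [Multiset.map_cons, Multiset.cons_bind, ← Multiset.singleton_add]
    have hp := hS p (Multiset.mem_cons_self _ _)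
    exact reflTransGen_liftStep_add (hp.1.reflTransGen_liftStep_edges hp.2)
      (ih fun q hq => hS q (Multiset.mem_cons_of_mem hq))

theorem exists_map_ends_eq_bind_edges_eq {D : Multiset (Sym2 V)}
    (hG : ∀ e ∈ D, e ∈ G.edgeSet) : ∃ S : Multiset G.SigmaWalk,
      S.map SigmaWalk.ends = D ∧ (∀ p ∈ S, p.2.2.IsPath) ∧ S.bind SigmaWalk.edges = D := by
  induction D using Multiset.induction_on with
  | empty => exact ⟨0, rfl, by simp, rfl⟩
  | cons e D ih =>
    induction e using Sym2.ind with | h a b =>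
    have hab : G.Adj a b := hG _ (Multiset.mem_cons_self _ _)
    obtain ⟨S, hD, hpath, hbind⟩ := ih fun e he => hG e (Multiset.mem_cons_of_mem he)
    refine ⟨⟨a, b, hab.toWalk⟩ ::ₘ S, by rw [Multiset.map_cons, hD]; rfl, ?_, ?_⟩
    · simpa [hab.ne] using hpath
    · rw [Multiset.cons_bind, hbind]; rfl

end SimpleGraph

section Resolvable

variable {G : SimpleGraph V}

theorem nodup_bind_edges_iff_pairwise {l : List G.SigmaWalk} (hl : ∀ p ∈ l, p.2.2.IsPath) :
    ((l : Multiset G.SigmaWalk).bind SigmaWalk.edges).Nodup ↔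
      l.Pairwise fun p q => ∀ e ∈ p.2.2.edges, e ∉ q.2.2.edges := by
  rw [show (l : Multiset G.SigmaWalk).bind SigmaWalk.edges =
      (l : Multiset G.SigmaWalk).bind fun p => (p.2.2.edges : Multiset _) from rfl,
    Multiset.coe_bind, Multiset.coe_nodup, List.nodup_flatMap]
  exact and_iff_right fun p hp => (hl p hp).edges_nodup

theorem isResolvable_iff_exists_multiset {D : Multiset (Sym2 V)} :
    IsResolvable G D ↔ ∃ S : Multiset G.SigmaWalk, S.map SigmaWalk.ends = D ∧
      (∀ p ∈ S, p.2.2.IsPath) ∧ (S.bind SigmaWalk.edges).Nodup := by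
  constructor
  · rintro ⟨l, hD, hpath, hdisj⟩
    exact ⟨l, hD, hpath, (nodup_bind_edges_iff_pairwise hpath).2 hdisj⟩
  · rintro ⟨S, hD, hpath, hnd⟩
    induction S using Quotient.inductionOn with | h l =>
    exact ⟨l, hD, hpath, (nodup_bind_edges_iff_pairwise hpath).1 hnd⟩

theorem isResolvable_of_nodup {D : Multiset (Sym2 V)} (hnd : D.Nodup)
    (hG : ∀ e ∈ D, e ∈ G.edgeSet) : IsResolvable G D := by
  obtain ⟨S, hD, hpath, hbind⟩ := exists_map_ends_eq_bind_edges_eq hG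
  exact isResolvable_iff_exists_multiset.2 ⟨S, hD, hpath, hbind ▸ hnd⟩

theorem IsResolvable.of_liftStep [DecidableEq V] {D D' : Multiset (Sym2 V)}
    (h : LiftStep D D') (hres : IsResolvable G D') : IsResolvable G D := by
  classical
  obtain ⟨x, y, z, hmem, -, -, rfl⟩ := h
  obtain ⟨S, hS, hpath, hnd⟩ := isResolvable_iff_exists_multiset.1 hres
  obtain ⟨p, hp, hpxz, hS'⟩ := (Multiset.map_eq_cons _ _ _ _).2 hS
  obtain ⟨q, hq, hqzy, hrest⟩ := (Multiset.map_eq_cons _ _ _ _).2 hS'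
  set rest := (S.erase p).erase q
  have hsplit : S = p ::ₘ q ::ₘ rest := by rw [Multiset.cons_erase hq, Multiset.cons_erase hp]
  obtain ⟨w₁, hw₁⟩ := p.2.2.exists_edges_subset_of_sym2_eq_s8 hpxz
  obtain ⟨w₂, hw₂⟩ := q.2.2.exists_edges_subset_of_sym2_eq_s8 hqzy
  let r : G.SigmaWalk := ⟨x, y, (w₁.append w₂).bypass⟩
  have hr : r.edges ⊆ p.edges + q.edges := by
    intro e he
    have := (w₁.append w₂).edges_bypass_subset_edges he
    rw [Walk.edges_append, List.mem_append] at this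
    exact Multiset.mem_add.2 (this.imp (@hw₁ e) (@hw₂ e))
  refine isResolvable_iff_exists_multiset.2 ⟨r ::ₘ rest, ?_, ?_, ?_⟩
  · rw [Multiset.map_cons, hrest]
    exact Multiset.cons_erase hmem
  · rw [hsplit] at hpath
    simp only [Multiset.forall_mem_cons] at hpath ⊢
    exact ⟨Walk.bypass_isPath _, hpath.2.2⟩
  · rw [hsplit, Multiset.cons_bind, Multiset.cons_bind, ← add_assoc] at hnd
    obtain ⟨-, hnd_rest, hdisj⟩ := Multiset.nodup_add.1 hnd
    rw [Multiset.cons_bind]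
    exact Multiset.nodup_add.2 ⟨(Walk.bypass_isPath _).edges_nodup, hnd_rest,
      Multiset.disjoint_of_subset_left hr hdisj⟩

end Resolvable

/-- `D` is resolvable in `G` iff some finite sequence of
liftings transforms `D` into a demand graph with pairwise distinct demand
edges, all of which are edges of `G` (i.e. into a simple subgraph of `G`). -/
theorem resolvable_iff_liftings [DecidableEq V] (G : SimpleGraph V)
    (D : Multiset (Sym2 V)) (hD : ∀ e ∈ D, ¬ e.IsDiag) :
    IsResolvable G D ↔
      ∃ D' : Multiset (Sym2 V), Relation.ReflTransGen LiftStep D D' ∧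
        D'.Nodup ∧ ∀ e ∈ D', e ∈ G.edgeSet := by
  constructor
  · rw [isResolvable_iff_exists_multiset]
    rintro ⟨S, rfl, hpath, hnd⟩
    have hne : ∀ p ∈ S, p.1 ≠ p.2.1 := fun p hp h =>
      hD _ (Multiset.mem_map_of_mem _ hp) (Sym2.mk_isDiag_iff.2 h)
    refine ⟨S.bind SigmaWalk.edges, reflTransGen_liftStep_map_ends_bind_edges S
      fun p hp => ⟨hpath p hp, hne p hp⟩, hnd, ?_⟩
    simp only [Multiset.mem_bind]
    rintro e ⟨p, -, he⟩
    exact p.2.2.edges_subset_edgeSet he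
  · rintro ⟨D', hlift, hnd, hG⟩
    clear hD
    induction hlift using ReflTransGen.head_induction_on with
    | refl => exact isResolvable_of_nodup hnd hG
    | head hstep _ ih => exact ih.of_liftStep hstep
end

section
/- Let A and B be disjoint finite sets, let D be a demand graph on (A, B), and let Z ⊆ A ∪ B. Suppose that the demand edges of D incident to at least one vertex of Z are pairwise distinct (no two of them join the same pair of vertices), and that the demand graph consisting of those demand edges of D with both endpoints outside Z is resolvable in the complete bipartite graph K_{A∖Z, B∖Z}. Then D is resolvable in the complete bipartite graph K_{A,B}. -/
/-!
The demand edges meeting `Z` are pairwise distinct edges of `K_{A,B}`, so each can be routed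
along its own edge. Every edge of `K_{A∖Z, B∖Z}` avoids `Z`, so these single-edge paths are
edge-disjoint from any resolution of the remaining demands in `K_{A∖Z, B∖Z}`, and the union of
the two resolutions resolves `D` in `K_{A,B}`.
-/

variable {V : Type*}

open SimpleGraph

namespace IsResolvable

variable {G H : SimpleGraph V} {D D₁ D₂ : Multiset (Sym2 V)}

theorem zero (G : SimpleGraph V) : IsResolvable G 0 :=
  ⟨[], by simp⟩

theorem single {u v : V} (h : G.Adj u v) : IsResolvable G {s(u, v)} :=
  ⟨[⟨u, v, Walk.cons h Walk.nil⟩], rfl, by simp [h.ne], by simp⟩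

theorem mono (hGH : G ≤ H) (hD : IsResolvable G D) : IsResolvable H D := by
  obtain ⟨l, hends, hpath, hdisj⟩ := hD
  refine ⟨l.map fun p => ⟨p.1, p.2.1, p.2.2.mapLe hGH⟩, ?_, ?_, ?_⟩
  · simpa [Function.comp_def] using hends
  · rw [List.forall_mem_map]
    exact fun p hp => (hpath p hp).mapLe hGH
  · simpa [List.pairwise_map, Walk.edges_mapLe_eq_edges] using hdisj

theorem sup (h₁ : IsResolvable G D₁) (h₂ : IsResolvable H D₂) (hGH : Disjoint G H) :
    IsResolvable (G ⊔ H) (D₁ + D₂) := by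
  obtain ⟨l₁, hends₁, hpath₁, hdisj₁⟩ := h₁
  obtain ⟨l₂, hends₂, hpath₂, hdisj₂⟩ := h₂
  refine ⟨l₁.map (fun p => ⟨p.1, p.2.1, p.2.2.mapLe le_sup_left⟩) ++
    l₂.map (fun p => ⟨p.1, p.2.1, p.2.2.mapLe le_sup_right⟩), ?_, ?_, ?_⟩
  · simp [Function.comp_def, ← hends₁, ← hends₂]
  · simp only [List.forall_mem_append, List.forall_mem_map]
    exact ⟨fun p hp => (hpath₁ p hp).mapLe _, fun p hp => (hpath₂ p hp).mapLe _⟩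
  · simp only [List.pairwise_append, List.pairwise_map, Walk.edges_mapLe_eq_edges,
      List.mem_map]
    refine ⟨hdisj₁, hdisj₂, ?_⟩
    rintro _ ⟨p, -, rfl⟩ _ ⟨q, -, rfl⟩ e hp hq
    simp only [Walk.edges_mapLe_eq_edges] at hp hq
    exact Set.disjoint_left.mp (disjoint_edgeSet.mpr hGH)
      (p.2.2.edges_subset_edgeSet hp) (q.2.2.edges_subset_edgeSet hq)

end IsResolvable

theorem isResolvable_fromEdgeSet {D : Multiset (Sym2 V)} (hD : D.Nodup)
    (hdiag : ∀ e ∈ D, ¬ e.IsDiag) : IsResolvable (fromEdgeSet {e | e ∈ D}) D := by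
  induction D using Multiset.induction_on with
  | empty => exact IsResolvable.zero _
  | cons e D ih =>
    rw [Multiset.nodup_cons] at hD
    induction e using Sym2.ind with
    | h u v =>
      have huv : u ≠ v := by simpa using hdiag _ (Multiset.mem_cons_self _ _)
      have hdisj : Disjoint (fromEdgeSet {s(u, v)}) (fromEdgeSet {e | e ∈ D}) := by
        rw [fromEdgeSet_disjoint, edgeSet_fromEdgeSet, Set.disjoint_singleton_left]
        exact fun h => hD.1 h.1
      have hres := (IsResolvable.single (G := fromEdgeSet {s(u, v)}) ⟨rfl, huv⟩).sup
        (ih hD.2 fun e he => hdiag e (Multiset.mem_cons_of_mem he)) hdisj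
      rw [← fromEdgeSet_union, Multiset.singleton_add] at hres
      convert hres using 2
      ext
      simp

theorem completeBipartite_mono {A A' B B' : Finset V} (hA : A ⊆ A') (hB : B ⊆ B') :
    completeBipartite A B ≤ completeBipartite A' B' := fun _ _ ⟨hne, h⟩ =>
  ⟨hne, h.imp (And.imp (@hA _) (@hB _)) (And.imp (@hB _) (@hA _))⟩

theorem disjoint_fromEdgeSet_completeBipartite_sdiff [DecidableEq V] {A B Z : Finset V}
    {S : Set (Sym2 V)} (hS : ∀ e ∈ S, ∃ v ∈ Z, v ∈ e) :
    Disjoint (fromEdgeSet S) (completeBipartite (A \ Z) (B \ Z)) := by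
  rw [SimpleGraph.disjoint_left]
  rintro x y ⟨hxy, -⟩ ⟨-, hadj⟩
  obtain ⟨v, hvZ, hv⟩ := hS _ hxy
  rcases Sym2.mem_iff.mp hv with rfl | rfl <;>
    rcases hadj with ⟨hx, hy⟩ | ⟨hx, hy⟩ <;> simp_all

namespace IsBipartiteDemand

variable {A B : Finset V} {D : Multiset (Sym2 V)}

theorem not_isDiag (hAB : Disjoint A B) (hD : IsBipartiteDemand A B D) :
    ∀ e ∈ D, ¬ e.IsDiag := by
  intro e he
  obtain ⟨a, ha, b, hb, rfl⟩ := hD e he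
  exact Sym2.mk_isDiag_iff.not.mpr (Finset.disjoint_left.mp hAB ha <| · ▸ hb)

theorem fromEdgeSet_le (hD : IsBipartiteDemand A B D) :
    fromEdgeSet {e | e ∈ D} ≤ completeBipartite A B := by
  rintro x y ⟨hxy, hne⟩
  obtain ⟨a, ha, b, hb, hab⟩ := hD _ hxy
  rcases Sym2.eq_iff.mp hab with ⟨rfl, rfl⟩ | ⟨rfl, rfl⟩
  · exact ⟨hne, .inl ⟨ha, hb⟩⟩
  · exact ⟨hne, .inr ⟨hb, ha⟩⟩

theorem filter (p : Sym2 V → Prop) [DecidablePred p] (hD : IsBipartiteDemand A B D) :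
    IsBipartiteDemand A B (D.filter p) :=
  fun e he => hD e (Multiset.mem_of_mem_filter he)

end IsBipartiteDemand

theorem induction_step_general [DecidableEq V] (A B : Finset V) (hAB : Disjoint A B)
    (D : Multiset (Sym2 V)) (hD : IsBipartiteDemand A B D)
    (Z : Finset V)
    (hinc : (D.filter fun e => ∃ v ∈ Z, v ∈ e).Nodup)
    (hres : IsResolvable (completeBipartite (A \ Z) (B \ Z))
      (D.filter fun e => ¬ ∃ v ∈ Z, v ∈ e)) :
    IsResolvable (completeBipartite A B) D := by
  set DZ := D.filter fun e => ∃ v ∈ Z, v ∈ e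
  have hDZ : IsBipartiteDemand A B DZ := hD.filter _
  have hresZ : IsResolvable (fromEdgeSet {e | e ∈ DZ}) DZ :=
    isResolvable_fromEdgeSet hinc (hDZ.not_isDiag hAB)
  have hdisj : Disjoint (fromEdgeSet {e | e ∈ DZ}) (completeBipartite (A \ Z) (B \ Z)) :=
    disjoint_fromEdgeSet_completeBipartite_sdiff fun _ he => (Multiset.mem_filter.mp he).2
  have hle : fromEdgeSet {e | e ∈ DZ} ⊔ completeBipartite (A \ Z) (B \ Z) ≤
      completeBipartite A B :=
    sup_le hDZ.fromEdgeSet_le (completeBipartite_mono Finset.sdiff_subset Finset.sdiff_subset)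
  simpa only [DZ, Multiset.filter_add_not] using (hresZ.sup hres hdisj).mono hle

/-- the induction step of Theorem 4: if the demand edges of
`D` incident to `Z` are pairwise distinct, and the demand edges of `D` with
both endpoints outside `Z` form a demand graph resolvable in
`K_{A \ Z, B \ Z}`, then `D` is resolvable in `K_{A,B}`. -/
theorem induction_step [DecidableEq V] (A B : Finset V) (hAB : Disjoint A B)
    (D : Multiset (Sym2 V)) (hD : IsBipartiteDemand A B D)
    (Z : Finset V) (hZ : Z ⊆ A ∪ B)
    (hinc : (D.filter fun e => ∃ v ∈ Z, v ∈ e).Nodup)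
    (hres : IsResolvable (completeBipartite (A \ Z) (B \ Z))
      (D.filter fun e => ¬ ∃ v ∈ Z, v ∈ e)) :
    IsResolvable (completeBipartite A B) D :=
  induction_step_general A B hAB D hD Z hinc hres
end

section
/- Let D be a demand graph on disjoint finite sets A and B with |A| = a and |B| = b, a ≥ b, such that every vertex of A has degree exactly Δ_A in D and every vertex of B has degree exactly Δ_B in D (so a·Δ_A = b·Δ_B equals the number of demand edges of D). If Δ_A ≤ b/4, then the multiset of demand edges of D can be partitioned into a sub-multisets M′₁, …, M′ₐ, each of which is a matching of size Δ_A (i.e. each M′ᵢ consists of Δ_A demand edges no two of which share an endpoint). -/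
variable {V : Type*}

/-!
Index the demand edges by the elements of `D` viewed as a type, and join two of them when they
share an endpoint. In this line graph every vertex `s(a, b)` has degree at most `ΔA + ΔB`, and
double counting (`|A| ΔA = |D| = |B| ΔB`) together with `4 ΔA ≤ |B| ≤ |A|` gives
`2 (ΔA + ΔB) ≤ |A|`. A matching partition as required is exactly a proper colouring of the line
graph with `|A|` colours whose colour classes all have size `ΔA`.

Such an equitable colouring exists in every graph with `2 Δ(G) ≤ n` colours: among colourings
with classes of equal size `s`, take one with fewest monochromatic edges. If `xy` were
monochromatic of colour `i`, count colours `j`: at most `n / 2` of them occur among the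
neighbours of `x`, and fewer than `n / 2` have their whole class inside the neighbourhood of
the other `s - 1` vertices of colour `i`. So some class `j` avoids the neighbourhood of `x` and
contains a vertex `z` with no neighbour of colour `i` other than `x`; swapping the colours of
`x` and `z` removes the edge `xy` from the monochromatic ones without adding any.
-/

open Finset

section Fibers

variable {ι κ : Type*} [Fintype ι] [Fintype κ] [DecidableEq κ]

theorem exists_card_fiber_eq {s : ℕ} (hcard : Fintype.card ι = Fintype.card κ * s) :
    ∃ c : ι → κ, ∀ k, #{u | c u = k} = s := by
  obtain e : ι ≃ κ × Fin s := Fintype.equivOfCardEq (by simp [hcard])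
  refine ⟨fun u => (e u).1, fun k => ?_⟩
  rw [card_equiv e (t := {k} ×ˢ univ) (by simp [Prod.ext_iff, eq_comm])]
  simp

omit [Fintype κ] in
theorem card_fiber_comp_equiv (c : ι → κ) (σ : ι ≃ ι) (k : κ) :
    #{u | c (σ u) = k} = #{u | c u = k} :=
  card_equiv σ (by simp)

theorem mul_card_fibers_subset_le [DecidableEq ι] {s : ℕ} {c : ι → κ}
    (hc : ∀ k, #{u | c u = k} = s) (T : Finset ι) :
    s * #{k | ∀ u, c u = k → u ∈ T} ≤ #T := by
  set bad : Finset κ := {k | ∀ u, c u = k → u ∈ T}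
  calc s * #bad = ∑ k ∈ bad, #{u | c u = k} := by
        rw [sum_congr rfl fun k _ => hc k, sum_const, smul_eq_mul, mul_comm]
    _ = #(bad.biUnion fun k => {u | c u = k}) := by
        refine (card_biUnion fun k _ l _ hkl => ?_).symm
        exact disjoint_filter.2 fun u _ hk hl => hkl (hk ▸ hl)
    _ ≤ #T := card_le_card fun u => by
        simp only [mem_biUnion, mem_filter, mem_univ, true_and, bad]
        rintro ⟨k, hk, rfl⟩
        exact hk u rfl

end Fibers

namespace SimpleGraph

variable {ι κ : Type*} [Fintype ι] [DecidableEq ι] [Fintype κ] [DecidableEq κ]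
variable (G : SimpleGraph ι) [DecidableRel G.Adj]

def monochromaticPairs (c : ι → κ) : Finset (ι × ι) :=
  {p | G.Adj p.1 p.2 ∧ c p.1 = c p.2}

variable {G}

omit [Fintype ι] [Fintype κ] [DecidableEq κ] [DecidableRel G.Adj] in
lemma ne_of_adj_of_comp_swap_eq {c : ι → κ} {x z u v : ι}
    (hx : ∀ w, G.Adj x w → c w ≠ c z) (hz : ∀ w, G.Adj z w → w ≠ x → c w ≠ c x)
    (hxz : c x ≠ c z) (huv : G.Adj u v) (hc : c (Equiv.swap x z u) = c (Equiv.swap x z v)) :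
    u ≠ x ∧ u ≠ z := by
  constructor
  · rintro rfl
    rw [Equiv.swap_apply_left] at hc
    by_cases hvz : v = z
    · rw [hvz, Equiv.swap_apply_right] at hc
      exact hxz hc.symm
    · rw [Equiv.swap_apply_of_ne_of_ne huv.ne' hvz] at hc
      exact hx v huv hc.symm
  · rintro rfl
    rw [Equiv.swap_apply_right] at hc
    by_cases hvx : v = x
    · rw [hvx, Equiv.swap_apply_left] at hc
      exact hxz hc
    · rw [Equiv.swap_apply_of_ne_of_ne hvx huv.ne'] at hc
      exact hz v huv hvx hc.symm

omit [Fintype κ] in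
lemma monochromaticPairs_comp_swap_ssubset {c : ι → κ} {x y z : ι}
    (hxy : G.Adj x y) (hcxy : c x = c y)
    (hx : ∀ w, G.Adj x w → c w ≠ c z) (hz : ∀ w, G.Adj z w → w ≠ x → c w ≠ c x) :
    G.monochromaticPairs (c ∘ Equiv.swap x z) ⊂ G.monochromaticPairs c := by
  have hxz : c x ≠ c z := hcxy ▸ hx y hxy
  refine (ssubset_iff_of_subset fun p hp => ?_).2
    ⟨(x, y), by simp [monochromaticPairs, hxy, hcxy], fun h => ?_⟩
  · simp only [monochromaticPairs, mem_filter, mem_univ, true_and, Function.comp_apply] at hp ⊢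
    obtain ⟨hu₁, hu₂⟩ := ne_of_adj_of_comp_swap_eq hx hz hxz hp.1 hp.2
    obtain ⟨hv₁, hv₂⟩ := ne_of_adj_of_comp_swap_eq hx hz hxz hp.1.symm hp.2.symm
    rwa [Equiv.swap_apply_of_ne_of_ne hu₁ hu₂, Equiv.swap_apply_of_ne_of_ne hv₁ hv₂] at hp
  · simp only [monochromaticPairs, mem_filter, mem_univ, true_and, Function.comp_apply] at h
    exact (ne_of_adj_of_comp_swap_eq hx hz hxz h.1 h.2).1 rfl

lemma exists_swap_partner {s : ℕ} {c : ι → κ} (hc : ∀ k, #{u | c u = k} = s)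
    (hdeg : ∀ v, 2 * G.degree v ≤ Fintype.card κ) (x : ι) :
    ∃ z, (∀ w, G.Adj x w → c w ≠ c z) ∧ (∀ w, G.Adj z w → w ≠ x → c w ≠ c x) := by
  set K := Fintype.card κ
  set N := (({u | c u = c x} : Finset ι).erase x).biUnion fun w => G.neighborFinset w
  set bad₁ := (G.neighborFinset x).image c
  set bad₂ : Finset κ := {k | ∀ u, c u = k → u ∈ N}
  have hs : 0 < s := hc (c x) ▸ card_pos.2 ⟨x, by simp⟩
  have h₁ : 2 * #bad₁ ≤ K := by
    grw [card_image_le, card_neighborFinset_eq_degree]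
    exact hdeg x
  have hN : 2 * #N ≤ (s - 1) * K := by
    calc 2 * #N ≤ 2 * ∑ w ∈ ({u | c u = c x} : Finset ι).erase x, G.degree w := by
          grw [card_biUnion_le]
          simp only [card_neighborFinset_eq_degree, le_refl]
      _ = ∑ w ∈ ({u | c u = c x} : Finset ι).erase x, 2 * G.degree w := mul_sum ..
      _ ≤ (s - 1) * K := by
          grw [sum_le_card_nsmul _ _ K fun w _ => hdeg w]
          rw [card_erase_of_mem (by simp), hc, smul_eq_mul]
  have h₂ : 2 * #bad₂ < K := by
    have hK : 0 < K := Fintype.card_pos_iff.2 ⟨c x⟩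
    have := mul_card_fibers_subset_le hc N
    refine Nat.lt_of_mul_lt_mul_left (a := s) ?_
    calc s * (2 * #bad₂) ≤ (s - 1) * K := by lia
      _ < s * K := Nat.mul_lt_mul_of_pos_right (by lia) hK
  obtain ⟨j, -, hj⟩ := exists_mem_notMem_of_card_lt_card (s := bad₁ ∪ bad₂) (t := univ)
    (by grw [card_univ, card_union_le]; lia)
  simp only [mem_union, not_or, bad₁, bad₂, N, mem_image, mem_neighborFinset, mem_filter,
    mem_univ, true_and, not_forall, mem_biUnion, mem_erase, not_exists, not_and] at hj
  obtain ⟨hj₁, z, rfl, hz⟩ := hj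
  exact ⟨z, fun w hw hcw => hj₁ w hw hcw, fun w hw hwx hcw => hz w ⟨hwx, hcw⟩ hw.symm⟩

theorem exists_equitable_coloring {s : ℕ} (hdeg : ∀ v, 2 * G.degree v ≤ Fintype.card κ)
    (hcard : Fintype.card ι = Fintype.card κ * s) :
    ∃ C : G.Coloring κ, ∀ k, #{u | C u = k} = s := by
  obtain ⟨c₀, hc₀⟩ := exists_card_fiber_eq hcard
  obtain ⟨c, hc, hmin⟩ := exists_min_image ({c | ∀ k, #{u | c u = k} = s} : Finset (ι → κ))
    (fun c => #(G.monochromaticPairs c)) ⟨c₀, by simpa using hc₀⟩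
  simp only [mem_filter, mem_univ, true_and] at hc hmin
  refine ⟨Coloring.mk c fun {x y} hxy hcxy => ?_, hc⟩
  obtain ⟨z, hx, hz⟩ := exists_swap_partner hc hdeg x
  exact (card_lt_card (monochromaticPairs_comp_swap_ssubset hxy hcxy hx hz)).not_ge
    (hmin _ fun k => (card_fiber_comp_equiv c _ k).trans (hc k))

end SimpleGraph

theorem Multiset.card_filter_univ_coe {α : Type*} [DecidableEq α] (m : Multiset α) (P : α → Prop)
    [DecidablePred P] : #{x : m | P x} = (m.filter P).card := by
  conv_rhs => rw [← Multiset.map_univ_coe m]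
  rw [Multiset.filter_map, Multiset.card_map]
  rfl

section Demand

variable [DecidableEq V]

def demandLineGraph (D : Multiset (Sym2 V)) : SimpleGraph D :=
  SimpleGraph.fromRel fun x y => ∃ w ∈ (x : Sym2 V), w ∈ (y : Sym2 V)

omit [DecidableEq V] in
lemma IsBipartiteDemand.symm {A B : Finset V} {D : Multiset (Sym2 V)}
    (hD : IsBipartiteDemand A B D) : IsBipartiteDemand B A D := fun e he => by
  obtain ⟨a, ha, b, hb, rfl⟩ := hD e he
  exact ⟨b, hb, a, ha, Sym2.eq_swap⟩

lemma sum_demandDegree_eq_card {A B : Finset V} (hAB : Disjoint A B) {D : Multiset (Sym2 V)}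
    (hD : IsBipartiteDemand A B D) : ∑ a ∈ A, demandDegree D a = D.card := by
  have hone (x : D) : #{a ∈ A | a ∈ (x : Sym2 V)} = 1 := by
    obtain ⟨a, ha, b, hb, hx⟩ := hD x Multiset.coe_mem
    refine card_eq_one.2 ⟨a, ext fun v => ?_⟩
    simp only [mem_filter, hx, Sym2.mem_iff, mem_singleton]
    constructor
    · rintro ⟨hv, rfl | rfl⟩
      · rfl
      · exact absurd hb (disjoint_left.1 hAB hv)
    · rintro rfl
      exact ⟨ha, Or.inl rfl⟩
  simp_rw [demandDegree, ← Multiset.card_filter_univ_coe]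
  have := sum_card_bipartiteAbove_eq_sum_card_bipartiteBelow (s := A) (t := (univ : Finset D))
    (r := fun (a : V) (x : D) => a ∈ (x : Sym2 V))
  simp only [bipartiteAbove, bipartiteBelow] at this
  rw [this, sum_congr rfl fun x _ => hone x]
  simp

lemma degree_demandLineGraph_le {D : Multiset (Sym2 V)} [DecidableRel (demandLineGraph D).Adj]
    {x : D} {a b : V} (hx : (x : Sym2 V) = s(a, b)) :
    (demandLineGraph D).degree x ≤ demandDegree D a + demandDegree D b := by
  classical
  rw [← SimpleGraph.card_neighborFinset_eq_degree, demandDegree, demandDegree,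
    ← Multiset.card_filter_univ_coe, ← Multiset.card_filter_univ_coe]
  grw [← card_union_le]
  refine card_le_card fun y hy => ?_
  rw [SimpleGraph.mem_neighborFinset, demandLineGraph, SimpleGraph.fromRel_adj, hx] at hy
  simp only [mem_union, mem_filter, mem_univ, true_and]
  obtain ⟨w, hwx, hwy⟩ : ∃ w ∈ s(a, b), w ∈ (y : Sym2 V) := by
    rcases hy.2 with h | ⟨w, hwy, hwx⟩
    · exact h
    · exact ⟨w, hwx, hwy⟩
  rcases Sym2.mem_iff.1 hwx with rfl | rfl
  · exact Or.inl hwy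
  · exact Or.inr hwy

lemma exists_matching_partition_of_coloring {κ : Type*} [Fintype κ] [DecidableEq κ]
    {D : Multiset (Sym2 V)} {s : ℕ} (C : (demandLineGraph D).Coloring κ)
    (hC : ∀ k, #{x | C x = k} = s) :
    ∃ M : κ → Multiset (Sym2 V), ∑ k, M k = D ∧
      ∀ k, (M k).card = s ∧ (M k).Pairwise fun e f => ∀ w ∈ e, w ∉ f := by
  refine ⟨fun k => ({x | C x = k} : Finset D).val.map fun x : D => (x : Sym2 V), ?_,
    fun k => ⟨by rw [Multiset.card_map]; exact hC k, ?_⟩⟩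
  · have hfib (t : Finset D) : t.val.map (fun x : D => (x : Sym2 V)) = ∑ x ∈ t, {(x : Sym2 V)} := by
      rw [sum_eq_multiset_sum, ← Multiset.sum_map_singleton (t.val.map _), Multiset.map_map]
      rfl
    simp only [hfib]
    rw [sum_fiberwise univ C, ← hfib, Multiset.map_univ_coe]
  · set t : Finset D := {x | C x = k}
    have hdisj : ∀ x ∈ t.val, ∀ y ∈ t.val, x ≠ y → ∀ w ∈ (x : Sym2 V), w ∉ (y : Sym2 V) := by
      intro x hx y hy hxy w hwx hwy
      simp only [t, mem_val, mem_filter, mem_univ, true_and] at hx hy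
      exact C.valid ((SimpleGraph.fromRel_adj ..).2 ⟨hxy, Or.inl ⟨w, hwx, hwy⟩⟩) (hx.trans hy.symm)
    obtain ⟨l, hl, hp⟩ := Multiset.Nodup.pairwise hdisj t.nodup
    exact ⟨l.map fun x : D => (x : Sym2 V), by rw [← Multiset.map_coe, ← hl],
      List.pairwise_map.2 hp⟩

end Demand

/-- the matching-splitting claim in the proof of Theorem 2:
if `D` is a semiregular bipartite demand graph on `(A, B)` with `|A| ≥ |B|`,
all degrees in `A` equal to `ΔA`, all degrees in `B` equal to `ΔB`, and
`ΔA ≤ |B| / 4`, then the demand edges of `D` can be partitioned into `|A|`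
matchings, each of size `ΔA`. -/
theorem matching_partition [DecidableEq V] (A B : Finset V)
    (hAB : Disjoint A B) (hba : B.card ≤ A.card)
    (D : Multiset (Sym2 V)) (hD : IsBipartiteDemand A B D)
    (ΔA ΔB : ℕ)
    (hdA : ∀ x ∈ A, demandDegree D x = ΔA)
    (hdB : ∀ y ∈ B, demandDegree D y = ΔB)
    (hΔ : (ΔA : ℝ) ≤ (B.card : ℝ) / 4) :
    ∃ M : Fin A.card → Multiset (Sym2 V),
      (∑ i, M i) = D ∧
      ∀ i, (M i).card = ΔA ∧
        (M i).Pairwise fun e f => ∀ w ∈ e, w ∉ f := by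
  classical
  have h4A : 4 * ΔA ≤ #B := by exact_mod_cast (by linarith : (4 * ΔA : ℝ) ≤ #B)
  have hcardA : D.card = #A * ΔA := by
    rw [← sum_demandDegree_eq_card hAB hD, sum_congr rfl hdA, sum_const, smul_eq_mul]
  have hcardB : D.card = #B * ΔB := by
    rw [← sum_demandDegree_eq_card hAB.symm hD.symm, sum_congr rfl hdB, sum_const, smul_eq_mul]
  have hdeg (x : D) : 2 * (demandLineGraph D).degree x ≤ #A := by
    obtain ⟨a, ha, b, hb, hx⟩ := hD x Multiset.coe_mem
    have h4B : 4 * ΔB ≤ #A :=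
      Nat.le_of_mul_le_mul_left (by nlinarith) (card_pos.2 ⟨b, hb⟩ : 0 < #B)
    grw [degree_demandLineGraph_le hx, hdA a ha, hdB b hb]
    lia
  obtain ⟨C, hC⟩ := (demandLineGraph D).exists_equitable_coloring (κ := Fin #A) (s := ΔA)
    (by simpa using hdeg) (by rw [Multiset.card_coe, Fintype.card_fin, hcardA])
  exact exists_matching_partition_of_coloring C hC
end
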